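/- arXiv:1406.0058 — 7 statements merged into one kernel-verified Lean document; each statement's English description precedes it below -/
import Mathlib

section
/- If X is a fibrant presheaf over an Eilenberg-Zilber category and x₀, x₁ : a → X are degenerate sections that are ∂-equivalent, then x₀ = x₁. -/
open CategoryTheory CategoryTheory.Limits CategoryTheory.GrothendieckTopology Opposite

universe u

variable (A : Type u) [SmallCategory A]

/-- The category of presheaves of sets on `A`. -/
abbrev Psh := Aᵒᵖ ⥤ Type u

variable {A}

/-- A model category structure on the category of presheaves on `A` whose
cofibrations are exactly the monomorphisms.  We record the weak equivalences
and the fibrations, together with the usual model category axioms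
(two-out-of-three, stability under retracts, lifting and factorization),
as well as the (derivable) stability of fibrations, trivial fibrations and
weak equivalences under pullback along fibrations. -/
structure PshModel (A : Type u) [SmallCategory A] where
  W : MorphismProperty (Psh A)
  Fib : MorphismProperty (Psh A)
  weq_id : ∀ X : Psh A, W (𝟙 X)
  weq_comp : ∀ {X Y Z : Psh A} (f : X ⟶ Y) (g : Y ⟶ Z), W f → W g → W (f ≫ g)
  weq_cancel_left : ∀ {X Y Z : Psh A} (f : X ⟶ Y) (g : Y ⟶ Z), W f → W (f ≫ g) → W g
  weq_cancel_right : ∀ {X Y Z : Psh A} (f : X ⟶ Y) (g : Y ⟶ Z), W g → W (f ≫ g) → W f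
  weq_retract : ∀ {X Y X' Y' : Psh A} (f : X ⟶ Y) (f' : X' ⟶ Y')
    (i : X ⟶ X') (r : X' ⟶ X) (j : Y ⟶ Y') (s : Y' ⟶ Y),
    i ≫ r = 𝟙 X → j ≫ s = 𝟙 Y → i ≫ f' = f ≫ j → f' ≫ s = r ≫ f → W f' → W f
  fib_retract : ∀ {X Y X' Y' : Psh A} (f : X ⟶ Y) (f' : X' ⟶ Y')
    (i : X ⟶ X') (r : X' ⟶ X) (j : Y ⟶ Y') (s : Y' ⟶ Y),
    i ≫ r = 𝟙 X → j ≫ s = 𝟙 Y → i ≫ f' = f ≫ j → f' ≫ s = r ≫ f → W f' → Fib f' → Fib f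
  fib_comp : ∀ {X Y Z : Psh A} (f : X ⟶ Y) (g : Y ⟶ Z), Fib f → Fib g → Fib (f ≫ g)
  lift_trivCof_fib : ∀ {X Y S T : Psh A} (i : X ⟶ Y) (p : S ⟶ T),
    Mono i → W i → Fib p → HasLiftingProperty i p
  lift_cof_trivFib : ∀ {X Y S T : Psh A} (i : X ⟶ Y) (p : S ⟶ T),
    Mono i → Fib p → W p → HasLiftingProperty i p
  fact_cof_trivFib : ∀ {X Y : Psh A} (f : X ⟶ Y),
    ∃ (Z : Psh A) (i : X ⟶ Z) (p : Z ⟶ Y), Mono i ∧ Fib p ∧ W p ∧ i ≫ p = f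
  fact_trivCof_fib : ∀ {X Y : Psh A} (f : X ⟶ Y),
    ∃ (Z : Psh A) (i : X ⟶ Z) (p : Z ⟶ Y), Mono i ∧ W i ∧ Fib p ∧ i ≫ p = f
  fib_pullback : ∀ {X Y Y' : Psh A} (v : Y ⟶ Y') (p : X ⟶ Y'),
    Fib p → Fib (pullback.fst v p)
  trivFib_pullback : ∀ {X Y Y' : Psh A} (v : Y ⟶ Y') (p : X ⟶ Y'),
    Fib p → W p → W (pullback.fst v p)

namespace PshModel

variable (M : PshModel A)

/-- Trivial fibrations. -/
def TrivFib {X Y : Psh A} (p : X ⟶ Y) : Prop := M.Fib p ∧ M.W p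

/-- Trivial cofibrations. -/
def TrivCof {X Y : Psh A} (i : X ⟶ Y) : Prop := Mono i ∧ M.W i

/-- An object is fibrant if the map to the terminal object is a fibration. -/
def Fibrant (X : Psh A) : Prop := M.Fib (terminal.from X)

/-- Right properness: weak equivalences are stable under pullback along fibrations. -/
def RightProper : Prop := ∀ {X Y Y' : Psh A} (v : Y ⟶ Y') (p : X ⟶ Y'),
  M.Fib p → M.W v → M.W (pullback.snd v p)

/-- Left properness: weak equivalences are stable under pushout along cofibrations
(= monomorphisms). -/
def LeftProper : Prop := ∀ {Z X Y : Psh A} (f : Z ⟶ X) (g : Z ⟶ Y),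
  Mono f → M.W g → M.W (pushout.inr g f)

def Proper : Prop := M.LeftProper ∧ M.RightProper

/-- Strong properness: the model structure is proper and fibrations are local:
a map is a fibration as soon as all of its pullbacks to representables are. -/
def StronglyProper : Prop :=
  M.Proper ∧ ∀ {X Y : Psh A} (p : X ⟶ Y),
    (∀ (a : A) (s : yoneda.obj a ⟶ Y), M.Fib (pullback.fst s p)) → M.Fib p

end PshModel

/-- An interval object for a model structure on presheaves: an object `I` with
two endpoints `i0`, `i1`, whose pairing is a monomorphism, and such that all the
projections `I × X → X` are weak equivalences. -/
structure PshInterval (M : PshModel A) where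
  I : Psh A
  i0 : ⊤_ (Psh A) ⟶ I
  i1 : ⊤_ (Psh A) ⟶ I
  endpoints_mono : Mono (coprod.desc i0 i1)
  proj_weq : ∀ X : Psh A, M.W (prod.snd : I ⨯ X ⟶ X)

namespace PshInterval

variable {M : PshModel A} (Iv : PshInterval M)

/-- The evaluation of a homotopy `h : I × X → Y` at the endpoint `ε`. -/
noncomputable def ev {X Y : Psh A} (e : ⊤_ (Psh A) ⟶ Iv.I) (h : Iv.I ⨯ X ⟶ Y) : X ⟶ Y :=
  prod.lift (terminal.from X ≫ e) (𝟙 X) ≫ h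

/-- A homotopy `h : I × X → Y` is constant on a subobject `S` of `X` if its
restriction to `I × S` factors through the projection to `S`. -/
def ConstantOn {X Y : Psh A} (h : Iv.I ⨯ X ⟶ Y) (S : Subfunctor X) : Prop :=
  ∃ k : S.toFunctor ⟶ Y, prod.map (𝟙 Iv.I) S.ι ≫ h = prod.snd ≫ k

end PshInterval

/-- The boundary of a presheaf: the supremum of all its proper subobjects.
For a representable presheaf over an Eilenberg-Zilber category this is the maximal
proper subobject. -/
def pshBoundary (X : Psh A) : Subfunctor X where
  obj U := {x | ∃ G : Subfunctor X, G ≠ ⊤ ∧ x ∈ G.obj U}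
  map := by
    rintro U V i x ⟨G, hG, hx⟩
    exact ⟨G, hG, G.map i hx⟩

/-- The boundary of a section `x : a ⟶ X`: the restriction of `x` to the
boundary of the representable presheaf `a`. -/
def sectionBoundary {X : Psh A} {a : A} (x : yoneda.obj a ⟶ X) :
    (pshBoundary (yoneda.obj a)).toFunctor ⟶ X :=
  (pshBoundary (yoneda.obj a)).ι ≫ x

/-- Two sections `x y : a ⟶ X` are `∂`-equivalent if they have the same boundary
and there is a homotopy between them which is constant on the boundary `∂a`. -/
def BdEquiv (M : PshModel A) (Iv : PshInterval M) {X : Psh A} {a : A}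
    (x y : yoneda.obj a ⟶ X) : Prop :=
  sectionBoundary x = sectionBoundary y ∧
  ∃ h : Iv.I ⨯ yoneda.obj a ⟶ X, Iv.ConstantOn h (pshBoundary (yoneda.obj a)) ∧
    Iv.ev Iv.i0 h = x ∧ Iv.ev Iv.i1 h = y

/-- A minimal complex: a fibrant object in which any two `∂`-equivalent sections
are equal. -/
def MinimalComplex (M : PshModel A) (Iv : PshInterval M) (X : Psh A) : Prop :=
  M.Fibrant X ∧ ∀ (a : A) (x y : yoneda.obj a ⟶ X), BdEquiv M Iv x y → x = y

/-- `∂`-equivalence of sections of `X` over `Y` (i.e. in the slice over `Y`):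
the homotopy is required to be fibrewise, i.e. constant over `Y`. -/
def BdEquivOver (M : PshModel A) (Iv : PshInterval M) {X Y : Psh A} (p : X ⟶ Y)
    {a : A} (x y : yoneda.obj a ⟶ X) : Prop :=
  x ≫ p = y ≫ p ∧
  sectionBoundary x = sectionBoundary y ∧
  ∃ h : Iv.I ⨯ yoneda.obj a ⟶ X, Iv.ConstantOn h (pshBoundary (yoneda.obj a)) ∧
    h ≫ p = prod.snd ≫ x ≫ p ∧
    Iv.ev Iv.i0 h = x ∧ Iv.ev Iv.i1 h = y

/-- A minimal fibration: a fibration which is a minimal complex as an object of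
the slice over its codomain (with the induced model structure), i.e. any two
sections which are `∂`-equivalent over the base are equal. -/
def MinFib (M : PshModel A) (Iv : PshInterval M) {X Y : Psh A} (p : X ⟶ Y) : Prop :=
  M.Fib p ∧ ∀ (a : A) (x y : yoneda.obj a ⟶ X), BdEquivOver M Iv p x y → x = y

/-- A Reedy category structure on `A`. -/
structure ReedyStruct (A : Type u) [SmallCategory A] where
  deg : A → ℕ
  plus : ∀ {a b : A}, (a ⟶ b) → Prop
  minus : ∀ {a b : A}, (a ⟶ b) → Prop
  plus_id : ∀ a : A, plus (𝟙 a)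
  minus_id : ∀ a : A, minus (𝟙 a)
  plus_comp : ∀ {a b c : A} (f : a ⟶ b) (g : b ⟶ c), plus f → plus g → plus (f ≫ g)
  minus_comp : ∀ {a b c : A} (f : a ⟶ b) (g : b ⟶ c), minus f → minus g → minus (f ≫ g)
  plus_deg : ∀ {a b : A} (f : a ⟶ b), plus f → deg a ≤ deg b
  minus_deg : ∀ {a b : A} (f : a ⟶ b), minus f → deg b ≤ deg a
  plus_deg_eq : ∀ {a b : A} (f : a ⟶ b), plus f → deg a = deg b →
    ∃ h : a = b, f = eqToHom h
  minus_deg_eq : ∀ {a b : A} (f : a ⟶ b), minus f → deg a = deg b →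
    ∃ h : a = b, f = eqToHom h
  fact : ∀ {a b : A} (f : a ⟶ b), ∃ (c : A) (g : a ⟶ c) (h : c ⟶ b),
    minus g ∧ plus h ∧ g ≫ h = f
  fact_unique : ∀ {a b c c' : A} (g : a ⟶ c) (h : c ⟶ b) (g' : a ⟶ c') (h' : c' ⟶ b),
    minus g → plus h → minus g' → plus h' → g ≫ h = g' ≫ h' →
    ∃ e : c = c', g' = g ≫ eqToHom e ∧ h = eqToHom e ≫ h'

namespace ReedyStruct

variable (R : ReedyStruct A)

/-- A section `y` of a presheaf is degenerate if it is the restriction of a section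
along a non-identity map of `A₋`. -/
def Degenerate {X : Psh A} {b : A} (y : X.obj (op b)) : Prop :=
  ∃ (c : A) (g : b ⟶ c), R.minus g ∧ R.deg c < R.deg b ∧ ∃ z : X.obj (op c), X.map g.op z = y

def Nondegenerate {X : Psh A} {b : A} (y : X.obj (op b)) : Prop := ¬ R.Degenerate y

end ReedyStruct

/-- An elegant Reedy category (in the sense of Bergner--Rezk): a Reedy category
in which every section of every presheaf is, in a unique way, the restriction of
a non-degenerate section along a map of `A₋`. -/
structure ElegantReedy (A : Type u) [SmallCategory A] extends ReedyStruct A where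
  ez_exists : ∀ (X : Psh A) (a : A) (x : X.obj (op a)),
    ∃ (b : A) (f : a ⟶ b) (y : X.obj (op b)),
      minus f ∧ toReedyStruct.Nondegenerate y ∧ X.map f.op y = x
  ez_unique : ∀ (X : Psh A) (a : A) {b b' : A} (f : a ⟶ b) (f' : a ⟶ b')
    (y : X.obj (op b)) (y' : X.obj (op b')),
    minus f → minus f' → toReedyStruct.Nondegenerate y → toReedyStruct.Nondegenerate y' →
    X.map f.op y = X.map f'.op y' →
    ∃ e : b = b', f' = f ≫ eqToHom e ∧ y = X.map (eqToHom e).op y'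

/-- An Eilenberg-Zilber category: a Reedy category in which every map of `A₋`
has a section, and two maps of `A₋` with the same set of sections are equal. -/
structure EZCat (A : Type u) [SmallCategory A] extends ReedyStruct A where
  EZ1 : ∀ {a b : A} (f : a ⟶ b), minus f → ∃ s : b ⟶ a, s ≫ f = 𝟙 b
  EZ2 : ∀ {a b : A} (f g : a ⟶ b), minus f → minus g →
    (∀ s : b ⟶ a, s ≫ f = 𝟙 b ↔ s ≫ g = 𝟙 b) → f = g

/-
A degenerate section is `y ∘ f` with `f : a ⟶ b` in `A₋` and `y` non-degenerate, and
`deg b < deg a`. Any section `s` of `f` is a map of lower degree into `a`, so it factors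
through `∂a`. Hence if two degenerate sections `y₀ ∘ f₀` and `y₁ ∘ f₁` agree on `∂a`, then
`y₀ = y₁ ∘ (s ≫ f₁)` for every section `s` of `f₀`; non-degeneracy of `y₀` forces `s ≫ f₁`
into `A₊`, and comparing degrees in both directions makes it an identity. So `f₀` and `f₁`
have the same sections, hence are equal by the Eilenberg-Zilber axiom, and then `y₀ = y₁`.
-/

namespace ReedyStruct

variable (R : ReedyStruct A)

theorem eq_id_of_plus {b : A} (f : b ⟶ b) (hf : R.plus f) : f = 𝟙 b := by
  obtain ⟨_, hf⟩ := R.plus_deg_eq f hf rfl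
  simpa using hf

theorem comp_ne_id_of_deg_lt {a c : A} (k : a ⟶ c) (s : c ⟶ a)
    (hdeg : R.deg c < R.deg a) : k ≫ s ≠ 𝟙 a := by
  intro hk
  obtain ⟨d₁, km, kp, hkm, hkp, rfl⟩ := R.fact k
  obtain ⟨d₂, sm, sp, hsm, hsp, rfl⟩ := R.fact s
  obtain ⟨d₃, m, p, hm, hp, hmp⟩ := R.fact (kp ≫ sm)
  have hcomp : (km ≫ m) ≫ (p ≫ sp) = 𝟙 a ≫ 𝟙 a := by
    simpa [reassoc_of% hmp] using hk
  obtain ⟨rfl, -⟩ := R.fact_unique _ _ _ _ (R.minus_comp km m hkm hm)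
    (R.plus_comp p sp hp hsp) (R.minus_id a) (R.plus_id a) hcomp
  have := R.plus_deg p hp
  have := R.minus_deg sm hsm
  omega

theorem mem_pshBoundary_of_deg_lt {a c : A} (s : c ⟶ a) (hdeg : R.deg c < R.deg a) :
    s ∈ (pshBoundary (yoneda.obj a)).obj (op c) := by
  refine ⟨Subfunctor.ofSection (F := yoneda.obj a) (X := op c) s, fun htop => ?_,
    Subfunctor.mem_ofSection_obj _⟩
  have hid : 𝟙 a ∈ (Subfunctor.ofSection (F := yoneda.obj a) (X := op c) s).obj (op a) := by
    rw [htop]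
    trivial
  obtain ⟨k, hk⟩ := hid
  exact R.comp_ne_id_of_deg_lt k.unop s hdeg hk

theorem plus_of_nondegenerate_map {X : Psh A} {b b' : A} (q : b ⟶ b') (y : X.obj (op b'))
    (hy : R.Nondegenerate (X.map q.op y)) : R.plus q := by
  obtain ⟨d, m, p, hm, hp, rfl⟩ := R.fact q
  rcases (R.minus_deg m hm).lt_or_eq with hlt | heq
  · exact absurd ⟨d, m, hm, hlt, X.map p.op y, by simp⟩ hy
  · obtain ⟨rfl, rfl⟩ := R.minus_deg_eq m hm heq.symm
    simpa using hp

variable {R}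

theorem Degenerate.exists_nondegenerate {X : Psh A} {c : A} {z : X.obj (op c)}
    (hz : R.Degenerate z) : ∃ (b : A) (f : c ⟶ b) (y : X.obj (op b)),
      R.minus f ∧ R.deg b < R.deg c ∧ R.Nondegenerate y ∧ X.map f.op y = z := by
  induction hn : R.deg c using Nat.strong_induction_on generalizing c with
  | _ n ih =>
    subst hn
    obtain ⟨c', g, hg, hlt, w, rfl⟩ := hz
    by_cases hw : R.Degenerate w
    · obtain ⟨b, f, y, hf, hb, hy, rfl⟩ := ih _ hlt hw rfl
      exact ⟨b, g ≫ f, y, R.minus_comp g f hg hf, hb.trans hlt, hy, by simp⟩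
    · exact ⟨c', g, w, hg, hlt, hw, rfl⟩

variable (R)

theorem eq_map_comp_of_map_section_eq {X : Psh A} {a b₀ b₁ : A} {f₀ : a ⟶ b₀}
    (f₁ : a ⟶ b₁) {s : b₀ ⟶ a} (hs : s ≫ f₀ = 𝟙 b₀) {y₀ : X.obj (op b₀)}
    (y₁ : X.obj (op b₁)) (hy₀ : R.Nondegenerate y₀)
    (h : X.map s.op (X.map f₀.op y₀) = X.map s.op (X.map f₁.op y₁)) :
    y₀ = X.map (s ≫ f₁).op y₁ ∧ R.plus (s ≫ f₁) := by
  have hy : y₀ = X.map (s ≫ f₁).op y₁ := by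
    simpa [← Functor.map_comp_apply, ← op_comp, hs] using h
  exact ⟨hy, R.plus_of_nondegenerate_map _ _ (hy ▸ hy₀)⟩

end ReedyStruct

theorem map_eq_of_sectionBoundary_eq {X : Psh A} {a c : A}
    {x₀ x₁ : yoneda.obj a ⟶ X} (h : sectionBoundary x₀ = sectionBoundary x₁) (s : c ⟶ a)
    (hs : s ∈ (pshBoundary (yoneda.obj a)).obj (op c)) :
    X.map s.op (yonedaEquiv x₀) = X.map s.op (yonedaEquiv x₁) := by
  have hx (x : yoneda.obj a ⟶ X) :
      X.map s.op (yonedaEquiv x) = (sectionBoundary x).app (op c) ⟨s, hs⟩ := by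
    rw [CategoryTheory.yonedaEquiv_naturality, CategoryTheory.yonedaEquiv_apply]
    simp [sectionBoundary]
    rfl
  rw [hx, hx, h]

namespace EZCat

variable (E : EZCat A)

theorem map_eq_of_map_eq_on_lower_deg {X : Psh A} {a b₀ b₁ : A} {f₀ : a ⟶ b₀} {f₁ : a ⟶ b₁}
    (hf₀ : E.minus f₀) (hf₁ : E.minus f₁) (hb₀ : E.deg b₀ < E.deg a)
    (hb₁ : E.deg b₁ < E.deg a) {y₀ : X.obj (op b₀)} {y₁ : X.obj (op b₁)}
    (hy₀ : E.Nondegenerate y₀) (hy₁ : E.Nondegenerate y₁)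
    (h : ∀ {c : A} (s : c ⟶ a), E.deg c < E.deg a →
      X.map s.op (X.map f₀.op y₀) = X.map s.op (X.map f₁.op y₁)) :
    X.map f₀.op y₀ = X.map f₁.op y₁ := by
  have key₀ := fun s hs => E.eq_map_comp_of_map_section_eq f₁ hs y₁ hy₀ (h s hb₀)
  have key₁ := fun s hs => E.eq_map_comp_of_map_section_eq f₀ hs y₀ hy₁ (h s hb₁).symm
  obtain ⟨s₀, hs₀⟩ := E.EZ1 f₀ hf₀
  obtain ⟨s₁, hs₁⟩ := E.EZ1 f₁ hf₁
  obtain ⟨rfl, -⟩ := E.plus_deg_eq _ (key₀ s₀ hs₀).2 <|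
    (E.plus_deg _ (key₀ s₀ hs₀).2).antisymm (E.plus_deg _ (key₁ s₁ hs₁).2)
  have hsec : ∀ s : b₀ ⟶ a, s ≫ f₀ = 𝟙 b₀ ↔ s ≫ f₁ = 𝟙 b₀ := fun s =>
    ⟨fun hs => E.eq_id_of_plus _ (key₀ s hs).2, fun hs => E.eq_id_of_plus _ (key₁ s hs).2⟩
  obtain rfl := E.EZ2 f₀ f₁ hf₀ hf₁ hsec
  have hy : y₀ = y₁ := by simpa [hs₀] using (key₀ s₀ hs₀).1
  rw [hy]

theorem eq_of_degenerate_of_sectionBoundary_eq {X : Psh A} {a : A}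
    {x₀ x₁ : yoneda.obj a ⟶ X} (hd₀ : E.Degenerate (yonedaEquiv x₀))
    (hd₁ : E.Degenerate (yonedaEquiv x₁)) (h : sectionBoundary x₀ = sectionBoundary x₁) :
    x₀ = x₁ := by
  obtain ⟨b₀, f₀, y₀, hf₀, hb₀, hy₀, hx₀⟩ := hd₀.exists_nondegenerate
  obtain ⟨b₁, f₁, y₁, hf₁, hb₁, hy₁, hx₁⟩ := hd₁.exists_nondegenerate
  apply yonedaEquiv.injective
  rw [← hx₀, ← hx₁]
  refine E.map_eq_of_map_eq_on_lower_deg hf₀ hf₁ hb₀ hb₁ hy₀ hy₁ fun s hs => ?_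
  rw [hx₀, hx₁]
  exact map_eq_of_sectionBoundary_eq h s (E.mem_pshBoundary_of_deg_lt s hs)

end EZCat

theorem stmt1_general (E : EZCat A) (M : PshModel A) (Iv : PshInterval M)
    {X : Psh A} {a : A} (x₀ x₁ : yoneda.obj a ⟶ X)
    (hd₀ : E.toReedyStruct.Degenerate (yonedaEquiv x₀))
    (hd₁ : E.toReedyStruct.Degenerate (yonedaEquiv x₁))
    (h : BdEquiv M Iv x₀ x₁) : x₀ = x₁ :=
  E.eq_of_degenerate_of_sectionBoundary_eq hd₀ hd₁ h.1

/-- Lemma: two degenerate sections of a fibrant object which are `∂`-equivalent are equal. -/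
theorem stmt1 (E : EZCat A) (M : PshModel A) (Iv : PshInterval M)
    {X : Psh A} (hX : M.Fibrant X) {a : A} (x₀ x₁ : yoneda.obj a ⟶ X)
    (hd₀ : E.toReedyStruct.Degenerate (yonedaEquiv x₀))
    (hd₁ : E.toReedyStruct.Degenerate (yonedaEquiv x₁))
    (h : BdEquiv M Iv x₀ x₁) : x₀ = x₁ :=
  stmt1_general E M Iv x₀ x₁ hd₀ hd₁ h
end

section
/- If X is a minimal complex in presheaves over an Eilenberg-Zilber category and f : X → X is I-homotopic to the identity, then f is an isomorphism. -/
open CategoryTheory CategoryTheory.Limits CategoryTheory.GrothendieckTopology Opposite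

universe u

variable (A : Type u) [SmallCategory A]

variable {A}

/-!
Over an Eilenberg–Zilber category every section of the boundary `∂b` of a representable
factors through an object of strictly lower degree, so one can show by induction on the degree
of `b` that `f` is injective and surjective on sections over `b`.

If `x f = y f` and `x`, `y` agree on `∂b`, the homotopies `h ∘ (I × x)` and `h ∘ (I × y)` agree
on `I × ∂b` and at the endpoint `1`. Since `X` is fibrant, homotopy extension fills the open box
they span, and its remaining face is a homotopy from `x` to `y` constant on `∂b`: so `x = y` by
minimality. For surjectivity, lift the boundary of `y` along `f` (possible by induction, and
natural because `f` is already injective), extend `h` over `b` to a homotopy ending at `y`,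
and compare its origin `x` with `x f` in the same way.

Homotopy extension holds because `{e} × Z ∪ I × S ⊆ I × Z` is a trivial cofibration.
-/

open FunctorToTypes (prodMk)

namespace Psh

variable {P Q P' Q' R : Psh A} {U : Aᵒᵖ}

lemma exists_eq_prodMk (x : (P ⨯ Q).obj U) : ∃ a b, x = prodMk a b :=
  ⟨(prod.fst : P ⨯ Q ⟶ P).app U x, (prod.snd : P ⨯ Q ⟶ Q).app U x, by ext <;> simp⟩

@[simp]
lemma prodMk_inj {a a' : P.obj U} {b b' : Q.obj U} :
    prodMk a b = prodMk a' b' ↔ a = a' ∧ b = b' := by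
  refine ⟨fun h ↦ ⟨?_, ?_⟩, fun ⟨ha, hb⟩ ↦ ha ▸ hb ▸ rfl⟩
  · simpa using congrArg ((prod.fst : P ⨯ Q ⟶ P).app U) h
  · simpa using congrArg ((prod.snd : P ⨯ Q ⟶ Q).app U) h

@[simp]
lemma prod_lift_app (f : R ⟶ P) (g : R ⟶ Q) (y : R.obj U) :
    (prod.lift f g).app U y = prodMk (f.app U y) (g.app U y) := by
  ext
  · rw [FunctorToTypes.prodMk_fst, ← NatTrans.comp_app_apply, prod.lift_fst]
  · rw [FunctorToTypes.prodMk_snd, ← NatTrans.comp_app_apply, prod.lift_snd]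

@[simp]
lemma prod_map_app (f : P ⟶ P') (g : Q ⟶ Q') (a : P.obj U) (b : Q.obj U) :
    (prod.map f g).app U (prodMk a b) = prodMk (f.app U a) (g.app U b) := by
  ext
  · rw [FunctorToTypes.prodMk_fst, ← NatTrans.comp_app_apply, prod.map_fst,
      NatTrans.comp_app_apply, FunctorToTypes.prodMk_fst]
  · rw [FunctorToTypes.prodMk_snd, ← NatTrans.comp_app_apply, prod.map_snd,
      NatTrans.comp_app_apply, FunctorToTypes.prodMk_snd]

lemma mem_range_prod_map_id (j : Q' ⟶ Q) (t : P.obj U) (z : Q.obj U) :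
    prodMk t z ∈ (Subfunctor.range (prod.map (𝟙 P) j)).obj U ↔ z ∈ Set.range (j.app U) := by
  constructor
  · rintro ⟨y, hy⟩
    obtain ⟨t', d, rfl⟩ := exists_eq_prodMk y
    simp only [prod_map_app, prodMk_inj] at hy
    exact ⟨d, hy.2⟩
  · rintro ⟨d, rfl⟩
    exact ⟨prodMk t d, by simp⟩

lemma injective_app_of_mono (f : P ⟶ Q) [Mono f] (U : Aᵒᵖ) : Function.Injective (f.app U) :=
  (mono_iff_injective _).1 inferInstance

instance (U : Aᵒᵖ) : Subsingleton ((⊤_ (Psh A)).obj U) where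
  allEq _ _ := yonedaEquiv.symm.injective (terminal.hom_ext _ _)

lemma exists_comp_eq_of_range_le (f : Q ⟶ R) [Mono f] (g : P ⟶ R)
    (h : Subfunctor.range g ≤ Subfunctor.range f) : ∃ x, x ≫ f = g :=
  ⟨Subfunctor.lift g h ≫ inv (Subfunctor.toRange f), by
    rw [Category.assoc, (IsIso.inv_comp_eq _).2 (Subfunctor.toRange_ι f).symm,
      Subfunctor.lift_ι]⟩

lemma eq_top_of_id_mem {b : A} {G : Subfunctor (yoneda.obj b)} (hG : 𝟙 b ∈ G.obj (op b)) :
    G = ⊤ := by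
  ext U g
  simpa using G.map g.op hG

section Glue

variable {F X : Psh A} {ι : Type*} {D : ι → Psh A}

def Compatible (j : ∀ k, D k ⟶ F) (g : ∀ k, D k ⟶ X) : Prop :=
  ∀ k l (U : Aᵒᵖ) (d : (D k).obj U) (d' : (D l).obj U),
    (j k).app U d = (j l).app U d' → (g k).app U d = (g l).app U d'

lemma compatible_of_mono [Subsingleton ι] (j : ∀ k, D k ⟶ F) [∀ k, Mono (j k)]
    (g : ∀ k, D k ⟶ X) : Compatible j g := by
  intro k l U d d' h
  obtain rfl := Subsingleton.elim k l
  obtain rfl := injective_app_of_mono (j k) U h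
  rfl

variable {j : ∀ k, D k ⟶ F} {T : Subfunctor F}

lemma exists_mem_range_of_eq_iSup (hT : T = ⨆ k, Subfunctor.range (j k)) {U : Aᵒᵖ}
    (x : T.toFunctor.obj U) : ∃ k d, (j k).app U d = x.1 := by
  have hx := x.2
  simp only [hT, Subfunctor.iSup_obj, Set.mem_iUnion, Subfunctor.range_obj, Set.mem_range] at hx
  exact hx

lemma exists_glue {g : ∀ k, D k ⟶ X} (hc : Compatible j g)
    (hT : T = ⨆ k, Subfunctor.range (j k)) :
    ∃ φ : T.toFunctor ⟶ X,
      ∀ k (hk : Subfunctor.range (j k) ≤ T), Subfunctor.lift (j k) hk ≫ φ = g k := by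
  choose κ δ hδ using fun U (x : T.toFunctor.obj U) ↦ exists_mem_range_of_eq_iSup hT x
  refine ⟨{ app U := TypeCat.ofHom fun x ↦ (g (κ U x)).app U (δ U x),
            naturality U V i := ?_ }, fun k hk ↦ ?_⟩
  · ext x
    change (g _).app V (δ V _) = X.map i ((g (κ U x)).app U (δ U x))
    rw [← NatTrans.naturality_apply]
    apply hc
    rw [hδ, NatTrans.naturality_apply, hδ]
    rfl
  · ext U d
    exact hc _ _ _ _ _ (hδ _ _)

lemma glue_hom_ext (hT : T = ⨆ k, Subfunctor.range (j k)) {φ ψ : T.toFunctor ⟶ X}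
    (h : ∀ k (hk : Subfunctor.range (j k) ≤ T),
      Subfunctor.lift (j k) hk ≫ φ = Subfunctor.lift (j k) hk ≫ ψ) : φ = ψ := by
  ext U x
  obtain ⟨k, d, hd⟩ := exists_mem_range_of_eq_iSup hT x
  have hk : Subfunctor.range (j k) ≤ T := hT ▸ le_iSup (fun k ↦ Subfunctor.range (j k)) k
  have hx : (Subfunctor.lift (j k) hk).app U d = x := Subtype.ext hd
  rw [← hx]
  exact ConcreteCategory.congr_hom (congr_app (h k hk) U) d

end Glue

end Psh

namespace PshModel

variable (M : PshModel A)

lemma W_of_isIso {X Y : Psh A} (f : X ⟶ Y) [IsIso f] : M.W f :=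
  M.weq_retract f (𝟙 X) (𝟙 X) (𝟙 X) (inv f) f (by simp) (by simp) (by simp) (by simp)
    (M.weq_id X)

/-- Retract argument: factor `i` as a trivial cofibration followed by a fibration. -/
lemma W_of_hasLiftingProperty {X Y : Psh A} (i : X ⟶ Y)
    (hi : ∀ {S T : Psh A} (p : S ⟶ T), M.Fib p → HasLiftingProperty i p) : M.W i := by
  obtain ⟨Z, j, p, -, hj, hp, rfl⟩ := M.fact_trivCof_fib i
  have := hi p hp
  have sq : CommSq j (j ≫ p) p (𝟙 Y) := ⟨by simp⟩
  exact M.weq_retract (j ≫ p) j (𝟙 X) (𝟙 X) sq.lift p (by simp) sq.fac_right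
    (by simp [sq.fac_left]) (by simp) hj

end PshModel

namespace PshInterval

open Psh

variable {M : PshModel A} (Iv : PshInterval M) (e : ⊤_ (Psh A) ⟶ Iv.I)

noncomputable def incl (Z : Psh A) : Z ⟶ Iv.I ⨯ Z :=
  prod.lift (terminal.from Z ≫ e) (𝟙 Z)

variable {ι : Type*} {D : ι → Psh A} {Z Z' X : Psh A}

lemma ev_eq_incl_comp (h : Iv.I ⨯ Z ⟶ X) : Iv.ev e h = Iv.incl e Z ≫ h := rfl

@[simp]
lemma incl_snd : Iv.incl e Z ≫ prod.snd = 𝟙 Z := prod.lift_snd _ _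

instance : IsSplitMono (Iv.incl e Z) := .mk' ⟨prod.snd, Iv.incl_snd e⟩

lemma W_incl : M.W (Iv.incl e Z) :=
  M.weq_cancel_right _ prod.snd (Iv.proj_weq Z) (by simpa using M.weq_id Z)

lemma incl_naturality (u : Z' ⟶ Z) : u ≫ Iv.incl e Z = Iv.incl e Z' ≫ prod.map (𝟙 _) u := by
  ext <;> simp [incl]

lemma incl_app {U : Aᵒᵖ} (z : Z.obj U) :
    (Iv.incl e Z).app U z = prodMk (e.app U ((terminal.from Z).app U z)) z := by
  simp [incl]

lemma mem_range_incl {U : Aᵒᵖ} (t : Iv.I.obj U) (z : Z.obj U) :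
    prodMk t z ∈ (Subfunctor.range (Iv.incl e Z)).obj U ↔ t ∈ Set.range (e.app U) := by
  constructor
  · rintro ⟨z', hz'⟩
    rw [incl_app, prodMk_inj] at hz'
    exact ⟨_, hz'.1⟩
  · rintro ⟨w, rfl⟩
    refine ⟨z, ?_⟩
    rw [incl_app, Subsingleton.elim ((terminal.from Z).app U z) w]

lemma ev_map (u : Z' ⟶ Z) (h : Iv.I ⨯ Z ⟶ X) :
    Iv.ev e (prod.map (𝟙 Iv.I) u ≫ h) = u ≫ Iv.ev e h := by
  rw [ev_eq_incl_comp, ev_eq_incl_comp, reassoc_of% (Iv.incl_naturality e u)]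

lemma endpoints_ne {U : Aᵒᵖ} (w w' : (⊤_ (Psh A)).obj U) : Iv.i0.app U w ≠ Iv.i1.app U w' := by
  intro h
  have := Iv.endpoints_mono
  have hinl : (coprod.inl : ⊤_ (Psh A) ⟶ _).app U w = (coprod.inr : ⊤_ (Psh A) ⟶ _).app U w' := by
    apply injective_app_of_mono (coprod.desc Iv.i0 Iv.i1) U
    rw [← NatTrans.comp_app_apply, ← NatTrans.comp_app_apply, coprod.inl_desc, coprod.inr_desc, h]
  simpa using congrArg ((FunctorToTypes.binaryCoproductIso _ _).hom.app U) hinl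

/-- `{e} × Z ∪ I × S` inside `I × Z`. -/
noncomputable def horn (S : Subfunctor Z) : Subfunctor (Iv.I ⨯ Z) :=
  Subfunctor.range (Iv.incl e Z) ⊔ S.preimage prod.snd

lemma range_incl_le_horn (S : Subfunctor Z) : Subfunctor.range (Iv.incl e Z) ≤ Iv.horn e S :=
  le_sup_left

lemma range_prod_map_ι_le_horn (S : Subfunctor Z) :
    Subfunctor.range (prod.map (𝟙 Iv.I) S.ι) ≤ Iv.horn e S := by
  rintro U _ ⟨y, rfl⟩
  obtain ⟨t, s, rfl⟩ := exists_eq_prodMk y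
  right
  simpa using s.2

/-- The pieces `{e} × Z` (for `none`) and `I × D k` of the horn of `⨆ k, range (j k)`. -/
noncomputable def hornIncl (j : ∀ k, D k ⟶ Z) :
    ∀ o : Option ι, (o.elim Z fun k ↦ Iv.I ⨯ D k) ⟶ Iv.I ⨯ Z
  | none => Iv.incl e Z
  | some k => prod.map (𝟙 _) (j k)

noncomputable def hornDesc (α : Z ⟶ X) (β : ∀ k, Iv.I ⨯ D k ⟶ X) :
    ∀ o : Option ι, (o.elim Z fun k ↦ Iv.I ⨯ D k) ⟶ X
  | none => α
  | some k => β k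

lemma horn_iSup_range_eq (j : ∀ k, D k ⟶ Z) :
    Iv.horn e (⨆ k, Subfunctor.range (j k)) = ⨆ o, Subfunctor.range (Iv.hornIncl e j o) := by
  ext U x
  obtain ⟨t, z, rfl⟩ := exists_eq_prodMk x
  simp only [horn, Subfunctor.max_obj, Subfunctor.iSup_obj, Set.mem_union, Set.mem_iUnion,
    Option.exists, hornIncl, Subfunctor.preimage_obj, Set.mem_preimage, FunctorToTypes.prodMk_snd]
  exact or_congr Iff.rfl (exists_congr fun k ↦ (mem_range_prod_map_id (j k) t z).symm)

lemma horn_eq_iSup_range (S : Subfunctor Z) :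
    Iv.horn e S = ⨆ o, Subfunctor.range (Iv.hornIncl e (fun _ : Unit ↦ S.ι) o) := by
  simpa using Iv.horn_iSup_range_eq e (fun _ : Unit ↦ S.ι)

lemma compatible_hornDesc {j : ∀ k, D k ⟶ Z} {α : Z ⟶ X} {β : ∀ k, Iv.I ⨯ D k ⟶ X}
    (hα : ∀ k, Iv.ev e (β k) = j k ≫ α)
    (hβ : Compatible (fun k ↦ prod.map (𝟙 Iv.I) (j k)) β) :
    Compatible (Iv.hornIncl e j) (Iv.hornDesc α β) := by
  have cross : ∀ l U (z : Z.obj U) (y : (Iv.I ⨯ D l).obj U),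
      (Iv.incl e Z).app U z = (prod.map (𝟙 Iv.I) (j l)).app U y → α.app U z = (β l).app U y := by
    intro l U z y h
    obtain ⟨t, d, rfl⟩ := exists_eq_prodMk y
    rw [incl_app, prod_map_app, prodMk_inj] at h
    obtain ⟨rfl, rfl⟩ := h
    have := ConcreteCategory.congr_hom (congr_app (hα l) U) d
    rw [ev_eq_incl_comp, NatTrans.comp_app_apply, incl_app] at this
    rw [← NatTrans.comp_app_apply, ← this, Subsingleton.elim ((terminal.from (D l)).app U d)]
  rintro (_ | k) (_ | l) U d d' h
  · obtain rfl : d = d' := injective_app_of_mono (Iv.incl e Z) U h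
    rfl
  · exact cross l U d d' h
  · exact (cross k U d' d h.symm).symm
  · exact hβ k l U d d' h

/-- The map on `I × S` is lifted through the trivial cofibration `S → I × S` and glued with the
given map on `{e} × Z`. -/
lemma hasLiftingProperty_horn (S : Subfunctor Z) {E B : Psh A} (p : E ⟶ B) (hp : M.Fib p) :
    HasLiftingProperty (Subfunctor.homOfLe (Iv.range_incl_le_horn e S)) p := by
  refine ⟨fun {u v} sq ↦ ?_⟩
  let r := Subfunctor.toRange (Iv.incl e Z)
  let c := Subfunctor.lift _ (Iv.range_prod_map_ι_le_horn e S)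
  have hr : S.ι ≫ r ≫ Subfunctor.homOfLe (Iv.range_incl_le_horn e S) =
      Iv.incl e S.toFunctor ≫ c := by
    rw [← cancel_mono (Iv.horn e S).ι]
    simp [r, c, incl_naturality]
  have := M.lift_trivCof_fib (Iv.incl e S.toFunctor) p inferInstance (Iv.W_incl e) hp
  have sqS : CommSq (S.ι ≫ r ≫ u) (Iv.incl e S.toFunctor) p (c ≫ v) :=
    ⟨by rw [Category.assoc, Category.assoc, sq.w, reassoc_of% hr]⟩
  obtain ⟨φ, hφ⟩ := exists_glue (Iv.compatible_hornDesc e (β := fun _ ↦ sqS.lift)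
    (fun _ ↦ sqS.fac_left) (compatible_of_mono _ _)) (Iv.horn_eq_iSup_range e S)
  have hrφ : r ≫ Subfunctor.homOfLe (Iv.range_incl_le_horn e S) ≫ φ = r ≫ u :=
    hφ none (Iv.range_incl_le_horn e S)
  refine ⟨⟨{ l := φ, fac_left := (cancel_epi r).1 hrφ, fac_right := ?_ }⟩⟩
  refine glue_hom_ext (Iv.horn_eq_iSup_range e S) fun o hk ↦ ?_
  cases o with
  | none =>
    change r ≫ Subfunctor.homOfLe hk ≫ φ ≫ p = r ≫ Subfunctor.homOfLe hk ≫ v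
    rw [reassoc_of% hrφ, sq.w]
  | some _ => exact (reassoc_of% (hφ (some ()) hk)) p |>.trans sqS.fac_right

lemma W_horn_ι (S : Subfunctor Z) : M.W (Iv.horn e S).ι := by
  have hW := M.weq_comp _ _ (M.W_of_isIso (Subfunctor.toRange (Iv.incl e Z)))
    (M.W_of_hasLiftingProperty _ fun p hp ↦ Iv.hasLiftingProperty_horn e S p hp)
  refine M.weq_cancel_left _ _ hW ?_
  simpa using Iv.W_incl e (Z := Z)

lemma exists_homotopy_extension (hX : M.Fibrant X) (j : ∀ k, D k ⟶ Z) (α : Z ⟶ X)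
    (β : ∀ k, Iv.I ⨯ D k ⟶ X) (hα : ∀ k, Iv.ev e (β k) = j k ≫ α)
    (hβ : Compatible (fun k ↦ prod.map (𝟙 Iv.I) (j k)) β) :
    ∃ H : Iv.I ⨯ Z ⟶ X, Iv.ev e H = α ∧ ∀ k, prod.map (𝟙 Iv.I) (j k) ≫ H = β k := by
  let T := Iv.horn e (⨆ k, Subfunctor.range (j k))
  have hT : T = _ := Iv.horn_iSup_range_eq e j
  obtain ⟨φ, hφ⟩ := exists_glue (Iv.compatible_hornDesc e hα hβ) hT
  have := M.lift_trivCof_fib T.ι (terminal.from X) inferInstance (Iv.W_horn_ι e _) hX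
  let sq : CommSq φ T.ι (terminal.from X) (terminal.from _) := ⟨terminal.hom_ext _ _⟩
  have hH : ∀ o, Iv.hornIncl e j o ≫ sq.lift = Iv.hornDesc α β o := fun o ↦ by
    have hk : Subfunctor.range (Iv.hornIncl e j o) ≤ T :=
      hT ▸ le_iSup (fun o ↦ Subfunctor.range (Iv.hornIncl e j o)) o
    rw [← Subfunctor.lift_ι _ hk, Category.assoc, sq.fac_left, hφ o hk]
  exact ⟨sq.lift, hH none, fun k ↦ hH (some k)⟩

/-- The two side faces `{0} × Z ∪ I × S` and `{1} × Z` of the open box in `I × Z`. -/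
noncomputable def boxSide (S : Subfunctor Z) : Bool → Subfunctor (Iv.I ⨯ Z)
  | true => Iv.horn Iv.i0 S
  | false => Subfunctor.range (Iv.incl Iv.i1 Z)

lemma snd_mem_of_mem_boxSide (S : Subfunctor Z) {U : Aᵒᵖ} {w : (Iv.I ⨯ Z).obj U}
    (h0 : w ∈ (Iv.boxSide S true).obj U) (h1 : w ∈ (Iv.boxSide S false).obj U) :
    (prod.snd : Iv.I ⨯ Z ⟶ Z).app U w ∈ S.obj U := by
  obtain ⟨t, z, rfl⟩ := exists_eq_prodMk w
  obtain ⟨w1, rfl⟩ := (Iv.mem_range_incl _ _ _).1 h1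
  rcases h0 with h0 | h0
  · obtain ⟨w0, h⟩ := (Iv.mem_range_incl _ _ _).1 h0
    exact absurd h (Iv.endpoints_ne w0 w1)
  · exact h0

lemma compatible_boxSide (S : Subfunctor Z) {H K : Iv.I ⨯ Z ⟶ X}
    (hS : prod.map (𝟙 Iv.I) S.ι ≫ H = prod.map (𝟙 Iv.I) S.ι ≫ K) :
    Compatible (fun b ↦ prod.map (𝟙 Iv.I) (Iv.boxSide S b).ι)
      (fun b ↦ prod.map (𝟙 Iv.I) ((Iv.boxSide S b).ι ≫ prod.snd) ≫ bif b then H else K) := by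
  have hHK : ∀ U t (w : (Iv.I ⨯ Z).obj U), w ∈ (Iv.boxSide S true).obj U →
      w ∈ (Iv.boxSide S false).obj U →
      H.app U (prodMk t ((prod.snd : Iv.I ⨯ Z ⟶ Z).app U w)) =
        K.app U (prodMk t ((prod.snd : Iv.I ⨯ Z ⟶ Z).app U w)) := by
    intro U t w h0 h1
    have := ConcreteCategory.congr_hom (congr_app hS U) (prodMk (F := Iv.I) (G := S.toFunctor)
      t (show S.toFunctor.obj U from ⟨_, Iv.snd_mem_of_mem_boxSide S h0 h1⟩))
    rwa [NatTrans.comp_app_apply, NatTrans.comp_app_apply, prod_map_app] at this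
  intro b c U y y' h
  obtain ⟨t, w, rfl⟩ := exists_eq_prodMk y
  obtain ⟨t', w', rfl⟩ := exists_eq_prodMk y'
  simp only [prod_map_app, prodMk_inj] at h
  obtain ⟨rfl, hw⟩ := h
  simp only [NatTrans.comp_app_apply, prod_map_app]
  change (bif b then H else K).app U (prodMk t ((prod.snd : Iv.I ⨯ Z ⟶ Z).app U w.1)) =
    (bif c then H else K).app U (prodMk t ((prod.snd : Iv.I ⨯ Z ⟶ Z).app U w'.1))
  have hw' : w.1 = w'.1 := hw
  rw [← hw']
  cases b <;> cases c
  · rfl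
  · exact (hHK U t w.1 (hw' ▸ w'.2) w.2).symm
  · exact hHK U t w.1 w.2 (hw' ▸ w'.2)
  · rfl

/-- Homotopy extension fills the open box `{e} × I × Z ∪ I × ({0, 1} × Z ∪ I × S)` in
`I × I × Z` with `H` and `K` on the two side faces; `G` is the face over `δ`. -/
lemma exists_constantOn_homotopy (hX : M.Fibrant X) (S : Subfunctor Z) {H K : Iv.I ⨯ Z ⟶ X}
    (hS : prod.map (𝟙 Iv.I) S.ι ≫ H = prod.map (𝟙 Iv.I) S.ι ≫ K) {e : ⊤_ (Psh A) ⟶ Iv.I}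
    (he : Iv.ev e H = Iv.ev e K) (δ : ⊤_ (Psh A) ⟶ Iv.I) :
    ∃ G : Iv.I ⨯ Z ⟶ X,
      Iv.ConstantOn G S ∧ Iv.ev Iv.i0 G = Iv.ev δ H ∧ Iv.ev Iv.i1 G = Iv.ev δ K := by
  let L : Bool → (Iv.I ⨯ Z ⟶ X) := fun b ↦ bif b then H else K
  obtain ⟨Φ, -, hΦ⟩ := Iv.exists_homotopy_extension e hX (fun b ↦ (Iv.boxSide S b).ι)
    (prod.snd ≫ Iv.ev e H) (fun b ↦ prod.map (𝟙 Iv.I) ((Iv.boxSide S b).ι ≫ prod.snd) ≫ L b)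
    (fun b ↦ by cases b <;> simp [L, ev_map, he]) (Iv.compatible_boxSide S hS)
  have restrict : ∀ b {W : Psh A} (u : W ⟶ Iv.I ⨯ Z), Subfunctor.range u ≤ Iv.boxSide S b →
      prod.map (𝟙 Iv.I) u ≫ Φ = prod.map (𝟙 Iv.I) (u ≫ prod.snd) ≫ L b := by
    intro b W u hu
    rw [← Subfunctor.lift_ι u hu, ← Category.id_comp (𝟙 Iv.I), ← prod.map_map, Category.assoc,
      hΦ b, ← Category.assoc, prod.map_map, Category.id_comp, Category.assoc]
  refine ⟨Iv.ev δ Φ, ⟨S.ι ≫ Iv.ev δ H, ?_⟩, ?_, ?_⟩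
  · rw [← ev_map, restrict true _ (Iv.range_prod_map_ι_le_horn _ S)]
    simp [L, ev_map]
  · rw [ev_eq_incl_comp, ← ev_map, restrict true _ (Iv.range_incl_le_horn _ S)]
    simp [L]
  · rw [ev_eq_incl_comp, ← ev_map, restrict false _ le_rfl]
    simp [L]

end PshInterval

namespace EZCat

variable (E : EZCat A) {X Y : Psh A} {b : A}

lemma exists_lt_deg_of_mem_boundary {U : Aᵒᵖ} {g : U.unop ⟶ b}
    (hg : g ∈ (pshBoundary (yoneda.obj b)).obj U) :
    ∃ (d : A) (m : U.unop ⟶ d) (p : d ⟶ b), E.deg d < E.deg b ∧ m ≫ p = g := by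
  obtain ⟨d, m, p, hm, hp, rfl⟩ := E.fact g
  refine ⟨d, m, p, (E.plus_deg p hp).lt_of_ne fun hdeg ↦ ?_, rfl⟩
  obtain ⟨rfl, rfl⟩ := E.plus_deg_eq p hp hdeg
  obtain ⟨s, hs⟩ := E.EZ1 m hm
  obtain ⟨G, hG, hmem⟩ := hg
  exact hG (Psh.eq_top_of_id_mem (by simpa [hs] using G.map s.op hmem))

lemma sectionBoundary_eq_of_lt_deg {x y : yoneda.obj b ⟶ X}
    (h : ∀ d (p : d ⟶ b), E.deg d < E.deg b → x.app (op d) p = y.app (op d) p) :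
    sectionBoundary x = sectionBoundary y := by
  ext U ⟨g, hg⟩
  obtain ⟨d, m, p, hd, rfl⟩ := E.exists_lt_deg_of_mem_boundary hg
  change x.app U ((yoneda.obj b).map m.op p) = y.app U ((yoneda.obj b).map m.op p)
  rw [NatTrans.naturality_apply, NatTrans.naturality_apply, h d p hd]

lemma range_sectionBoundary_le_of_lt_deg {x : yoneda.obj b ⟶ X} {f : Y ⟶ X}
    (h : ∀ d (p : d ⟶ b), E.deg d < E.deg b → x.app (op d) p ∈ Set.range (f.app (op d))) :
    Subfunctor.range (sectionBoundary x) ≤ Subfunctor.range f := by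
  rintro U _ ⟨⟨g, hg⟩, rfl⟩
  obtain ⟨d, m, p, hd, rfl⟩ := E.exists_lt_deg_of_mem_boundary hg
  obtain ⟨z, hz⟩ := h d p hd
  refine ⟨Y.map m.op z, ?_⟩
  change _ = x.app U ((yoneda.obj b).map m.op p)
  rw [NatTrans.naturality_apply, NatTrans.naturality_apply, hz]

end EZCat

namespace MinimalComplex

open PshInterval

variable {M : PshModel A} {Iv : PshInterval M} {X : Psh A} {f : X ⟶ X} {h : Iv.I ⨯ X ⟶ X}

lemma eq_of_comp_eq (hX : MinimalComplex M Iv X) (h0 : Iv.ev Iv.i0 h = 𝟙 X)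
    (h1 : Iv.ev Iv.i1 h = f) {b : A} {x y : yoneda.obj b ⟶ X} (hxy : x ≫ f = y ≫ f)
    (hbd : sectionBoundary x = sectionBoundary y) : x = y := by
  have hk0 (z : yoneda.obj b ⟶ X) : Iv.ev Iv.i0 (prod.map (𝟙 _) z ≫ h) = z := by
    rw [ev_map, h0, Category.comp_id]
  have hk1 (z : yoneda.obj b ⟶ X) : Iv.ev Iv.i1 (prod.map (𝟙 _) z ≫ h) = z ≫ f := by
    rw [ev_map, h1]
  have hS : prod.map (𝟙 Iv.I) (pshBoundary (yoneda.obj b)).ι ≫ prod.map (𝟙 _) x ≫ h =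
      prod.map (𝟙 Iv.I) (pshBoundary (yoneda.obj b)).ι ≫ prod.map (𝟙 _) y ≫ h := by
    rw [prod.map_map_assoc, prod.map_map_assoc]
    exact congrArg (fun z ↦ prod.map (𝟙 Iv.I ≫ 𝟙 Iv.I) z ≫ h) hbd
  obtain ⟨G, hG, hG0, hG1⟩ := Iv.exists_constantOn_homotopy hX.1 _ hS
    (by rw [hk1, hk1, hxy]) Iv.i0
  exact hX.2 b x y ⟨hbd, G, hG, hG0.trans (hk0 x), hG1.trans (hk0 y)⟩

lemma exists_comp_eq (hX : MinimalComplex M Iv X) (h0 : Iv.ev Iv.i0 h = 𝟙 X)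
    (h1 : Iv.ev Iv.i1 h = f) {b : A} (y : yoneda.obj b ⟶ X)
    {xb : (pshBoundary (yoneda.obj b)).toFunctor ⟶ X} (hxb : xb ≫ f = sectionBoundary y) :
    ∃ x, x ≫ f = y := by
  obtain ⟨H, hH1, hH⟩ := Iv.exists_homotopy_extension Iv.i1 hX.1
    (fun _ : Unit ↦ (pshBoundary (yoneda.obj b)).ι) y (fun _ ↦ prod.map (𝟙 _) xb ≫ h)
    (fun _ ↦ by rw [ev_map, h1, hxb]; rfl) (Psh.compatible_of_mono _ _)
  let x := Iv.ev Iv.i0 H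
  have hbx : (pshBoundary (yoneda.obj b)).ι ≫ x = xb := by
    rw [← ev_map, hH (), ev_map, h0, Category.comp_id]
  have hS : prod.map (𝟙 Iv.I) (pshBoundary (yoneda.obj b)).ι ≫ prod.map (𝟙 _) x ≫ h =
      prod.map (𝟙 Iv.I) (pshBoundary (yoneda.obj b)).ι ≫ H := by
    rw [prod.map_map_assoc, hbx, hH (), Category.comp_id]
  obtain ⟨G, hG, hG0, hG1⟩ := Iv.exists_constantOn_homotopy hX.1 _ hS
    (by rw [ev_map, h0, Category.comp_id]) Iv.i1
  refine ⟨x, hX.2 b _ _ ⟨?_, G, hG, hG0.trans (by rw [ev_map, h1]), hG1.trans hH1⟩⟩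
  rw [sectionBoundary, reassoc_of% hbx, hxb]

lemma injective_app (hX : MinimalComplex M Iv X) (h0 : Iv.ev Iv.i0 h = 𝟙 X)
    (h1 : Iv.ev Iv.i1 h = f) (E : EZCat A) (b : A) : Function.Injective (f.app (op b)) := by
  induction b using (measure E.deg).wf.induction with
  | _ b ih =>
    intro x0 y0 hxy
    have hcomp : yonedaEquiv.symm x0 ≫ f = yonedaEquiv.symm y0 ≫ f :=
      yonedaEquiv.injective (by simpa [CategoryTheory.yonedaEquiv_comp] using hxy)
    refine yonedaEquiv.symm.injective (hX.eq_of_comp_eq h0 h1 hcomp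
      (E.sectionBoundary_eq_of_lt_deg fun d p hd ↦ ih d hd ?_))
    rw [← NatTrans.comp_app_apply, ← NatTrans.comp_app_apply, hcomp]

lemma surjective_app (hX : MinimalComplex M Iv X) (h0 : Iv.ev Iv.i0 h = 𝟙 X)
    (h1 : Iv.ev Iv.i1 h = f) (E : EZCat A) [Mono f] (b : A) :
    Function.Surjective (f.app (op b)) := by
  induction b using (measure E.deg).wf.induction with
  | _ b ih =>
    intro y0
    obtain ⟨xb, hxb⟩ := Psh.exists_comp_eq_of_range_le f _
      (E.range_sectionBoundary_le_of_lt_deg (x := yonedaEquiv.symm y0) fun d p hd ↦ ih d hd _)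
    obtain ⟨x, hx⟩ := hX.exists_comp_eq h0 h1 _ hxb
    exact ⟨yonedaEquiv x, by rw [← CategoryTheory.yonedaEquiv_comp, hx, Equiv.apply_symm_apply]⟩

end MinimalComplex

/-- Lemma: an endomorphism of a minimal complex which is `I`-homotopic to the identity
is an isomorphism. -/
theorem stmt4 (E : EZCat A) (M : PshModel A) (Iv : PshInterval M)
    {X : Psh A} (hX : MinimalComplex M Iv X) (f : X ⟶ X)
    (h : Iv.I ⨯ X ⟶ X) (h0 : Iv.ev Iv.i0 h = 𝟙 X) (h1 : Iv.ev Iv.i1 h = f) :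
    IsIso f := by
  have hinj (U : Aᵒᵖ) := hX.injective_app h0 h1 E U.unop
  have : Mono f := (NatTrans.mono_iff_mono_app f).2 fun U ↦ (mono_iff_injective _).2 (hinj U)
  rw [NatTrans.isIso_iff_isIso_app]
  exact fun U ↦ (isIso_iff_bijective _).2 ⟨hinj U, hX.surjective_app h0 h1 E U.unop⟩
end

section
/- The class of minimal fibrations in presheaves over an Eilenberg-Zilber category is stable under pullback: if p' : X' → Y' is a minimal fibration and v : Y → Y' any map, then the induced map Y ×_{Y'} X' → Y is a minimal fibration. -/
open CategoryTheory CategoryTheory.Limits CategoryTheory.GrothendieckTopology Opposite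

universe u

variable (A : Type u) [SmallCategory A]

variable {A}

theorem sectionBoundary_comp {X Z : Psh A} {a : A} (x : yoneda.obj a ⟶ X) (f : X ⟶ Z) :
    sectionBoundary (x ≫ f) = sectionBoundary x ≫ f :=
  (Category.assoc _ _ _).symm

namespace PshInterval

theorem ev_comp {M : PshModel A} (Iv : PshInterval M) {X Y Z : Psh A} (e : ⊤_ (Psh A) ⟶ Iv.I)
    (h : Iv.I ⨯ X ⟶ Y) (f : Y ⟶ Z) :
    Iv.ev e (h ≫ f) = Iv.ev e h ≫ f :=
  (Category.assoc _ _ _).symm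

theorem ConstantOn.comp {M : PshModel A} {Iv : PshInterval M} {X Y Z : Psh A}
    {h : Iv.I ⨯ X ⟶ Y} {S : Subfunctor X} (hh : Iv.ConstantOn h S) (f : Y ⟶ Z) :
    Iv.ConstantOn (h ≫ f) S := by
  obtain ⟨k, hk⟩ := hh
  exact ⟨k ≫ f, by rw [reassoc_of% hk]⟩

end PshInterval

theorem BdEquivOver.comp_of_comm {M : PshModel A} {Iv : PshInterval M}
    {X Y X' Y' : Psh A} {p : X ⟶ Y} {p' : X' ⟶ Y'} {f : X ⟶ X'} {g : Y ⟶ Y'}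
    (w : p ≫ g = f ≫ p') {a : A} {x y : yoneda.obj a ⟶ X} (hxy : BdEquivOver M Iv p x y) :
    BdEquivOver M Iv p' (x ≫ f) (y ≫ f) := by
  obtain ⟨hbase, hbd, h, hconst, hfib, h0, h1⟩ := hxy
  refine ⟨?_, ?_, h ≫ f, hconst.comp f, ?_, ?_, ?_⟩
  · simp only [Category.assoc, ← w, reassoc_of% hbase]
  · rw [sectionBoundary_comp, sectionBoundary_comp, hbd]
  · simp only [Category.assoc, ← w, reassoc_of% hfib]
  · rw [PshInterval.ev_comp, h0]
  · rw [PshInterval.ev_comp, h1]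

theorem stmt7_general (M : PshModel A) (Iv : PshInterval M)
    {X' Y Y' : Psh A} (p' : X' ⟶ Y') (hp' : MinFib M Iv p') (v : Y ⟶ Y') :
    MinFib M Iv (pullback.fst v p') := by
  -- The first projections agree by hypothesis; the second ones by minimality of `p'`.
  refine ⟨M.fib_pullback v p' hp'.1, fun a x y hxy => pullback.hom_ext hxy.1 ?_⟩
  exact hp'.2 a _ _ (hxy.comp_of_comm pullback.condition)

/-- Proposition: minimal fibrations are stable under pullback. -/
theorem stmt7 (E : EZCat A) (M : PshModel A) (Iv : PshInterval M)
    {X' Y Y' : Psh A} (p' : X' ⟶ Y') (hp' : MinFib M Iv p') (v : Y ⟶ Y') :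
    MinFib M Iv (pullback.fst v p') :=
  stmt7_general M Iv p' hp' v
end

section
/- In a presheaf topos, for any monomorphism v : Y → Y' and any trivial fibration p : X → Y, there exists a trivial fibration p' : X' → Y' and a pullback square exhibiting p as the pullback of p' along v. Indeed one may take p' = v_*(p), the pushforward along v, using that v^* v_* ≅ id and that v_* preserves trivial fibrations. -/
open CategoryTheory CategoryTheory.Limits CategoryTheory.GrothendieckTopology Opposite

universe u

variable (A : Type u) [SmallCategory A]

variable {A}

/-!
Since `v` is mono we may regard `Y` as a subpresheaf `G` of `Y'` and take `p' = v_* p`, the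
dependent product along `G ↪ Y'`. Over a point of `Y` the only sections of `p` to choose are the
points of `X` above it, so `v^* v_* X ≅ X` and the square is a pullback. A lifting problem of a
monomorphism `i` against `v_* p` transposes, across `v^* ⊣ v_*`, to one of the monomorphism
`v^* i` against `p`, which `p` solves.
-/

namespace CategoryTheory.Subfunctor

variable {X Y' : Psh A} {G : Subfunctor Y'} {p : X ⟶ G.toFunctor}

/- A section of `v_* X` over `a` is a point `y'` of `Y'` over `a` together with a section of `p`
over the pullback of `y' : yoneda.obj a ⟶ Y'` along `G ↪ Y'`, i.e. over the sieve of those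
`f : b ⟶ a` with `f^* y' ∈ G`. -/
variable (G p) in
structure PushforwardSection (a : A) : Type u where
  base : Y'.obj (op a)
  sec ⦃b : A⦄ (f : b ⟶ a) : Y'.map f.op base ∈ G.obj (op b) → X.obj (op b)
  p_sec ⦃b : A⦄ (f : b ⟶ a) (hf) : p.app (op b) (sec f hf) = ⟨Y'.map f.op base, hf⟩
  map_sec ⦃b c : A⦄ (f : b ⟶ a) (g : c ⟶ b) (hf hgf) :
    X.map g.op (sec f hf) = sec (g ≫ f) hgf

namespace PushforwardSection

@[ext]
lemma ext {a : A} {s t : G.PushforwardSection p a} (hbase : s.base = t.base)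
    (hsec : ∀ ⦃b : A⦄ (f : b ⟶ a) (hs ht), s.sec f hs = t.sec f ht) : s = t := by
  obtain ⟨base, sec, _, _⟩ := s
  obtain ⟨_, sec', _, _⟩ := t
  subst hbase
  obtain rfl : sec = sec' := by
    funext b f hf
    exact hsec f hf hf
  rfl

def restrict {a a' : A} (s : G.PushforwardSection p a) (m : a' ⟶ a) :
    G.PushforwardSection p a' where
  base := Y'.map m.op s.base
  sec b f hf := s.sec (f ≫ m) (by simpa using hf)
  p_sec b f hf := by simpa using s.p_sec (f ≫ m) _
  map_sec b c f g _ _ := by simpa using s.map_sec (f ≫ m) g _ _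

def val {a : A} (s : G.PushforwardSection p a) (hs : s.base ∈ G.obj (op a)) : X.obj (op a) :=
  s.sec (𝟙 a) (by simpa using hs)

lemma p_val {a : A} (s : G.PushforwardSection p a) (hs) :
    p.app (op a) (s.val hs) = ⟨s.base, hs⟩ :=
  (s.p_sec _ _).trans (Subtype.ext (by simp))

lemma map_val {a b : A} (s : G.PushforwardSection p a) (hs) (f : b ⟶ a) (hf) :
    X.map f.op (s.val hs) = s.sec f hf :=
  (s.map_sec _ f _ (by simpa using hf)).trans (by simp)

lemma sec_eq_val_restrict {a b : A} (s : G.PushforwardSection p a) (f : b ⟶ a) (hf) :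
    s.sec f hf = (s.restrict f).val hf := by
  simp [val, restrict]

lemma val_restrict {a b : A} (s : G.PushforwardSection p a) (hs) (f : b ⟶ a) (hf) :
    (s.restrict f).val hf = X.map f.op (s.val hs) :=
  (s.sec_eq_val_restrict f hf).symm.trans (s.map_val hs f hf).symm

lemma val_congr {a : A} {s t : G.PushforwardSection p a} (hst : s = t) (hs) :
    s.val hs = t.val (hst ▸ hs) := by
  subst hst; rfl

end PushforwardSection

variable (G p) in
def pushforward : Psh A where
  obj a := G.PushforwardSection p a.unop
  map m := TypeCat.ofHom fun s => s.restrict m.unop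
  map_id a := by ext s <;> simp [PushforwardSection.restrict]
  map_comp m m' := by ext s <;> simp [PushforwardSection.restrict]

variable (G p) in
def pushforwardπ : G.pushforward p ⟶ Y' where
  app a := TypeCat.ofHom fun s => s.base

variable (G p) in
def toPushforward : X ⟶ G.pushforward p where
  app a := TypeCat.ofHom fun x =>
    { base := (p.app a x).1
      sec b f _ := X.map f.op x
      p_sec b f _ := Subtype.ext (G.nat_trans_naturality p f.op x)
      map_sec b c f g _ _ := by simp }
  naturality a a' m := by
    refine ConcreteCategory.hom_ext _ _ fun x => ?_
    refine PushforwardSection.ext ?_ ?_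
    · exact G.nat_trans_naturality p m x
    · intro b f _ _
      exact (X.map_comp_apply m f.op x).symm

lemma val_toPushforward_app {a : A} (x : X.obj (op a)) (hx) :
    ((G.toPushforward p).app (op a) x).val hx = x :=
  X.map_id_apply _ x

lemma toPushforward_app_val {a : A} (s : G.PushforwardSection p a) (hs) :
    (G.toPushforward p).app (op a) (s.val hs) = s := by
  refine PushforwardSection.ext (congrArg Subtype.val (s.p_val hs)) fun b f _ hf =>
    s.map_val hs f hf

variable (G p) in
lemma isPullback_toPushforward :
    IsPullback (G.toPushforward p) p (G.pushforwardπ p) G.ι := by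
  refine IsPullback.of_forall_isPullback_app fun a =>
    (Types.isPullback_iff _ _ _ _).2 ⟨?_, ?_, ?_⟩
  · ext x; rfl
  · rintro x x' ⟨hx, -⟩
    rw [← val_toPushforward_app x (p.app _ x).2, ← val_toPushforward_app x' (p.app _ x').2]
    exact PushforwardSection.val_congr hx _
  · rintro s y (hy : s.base = y.1)
    refine ⟨s.val (hy ▸ y.2), toPushforward_app_val s _, ?_⟩
    exact (s.p_val _).trans (Subtype.ext hy)

variable {L : Psh A}

/- The two directions of the adjunction `v^* ⊣ v_*` between the slices over `Y` and `Y'`. -/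
def pushforwardLift (g : L ⟶ Y') (ℓ : (G.preimage g).toFunctor ⟶ X)
    (hℓ : ℓ ≫ p = G.fromPreimage g) : L ⟶ G.pushforward p where
  app a := TypeCat.ofHom fun l =>
    { base := g.app a l
      sec b f hf := ℓ.app (op b) ⟨L.map f.op l, by simpa [NatTrans.naturality_apply] using hf⟩
      p_sec b f _ := (ConcreteCategory.congr_hom (NatTrans.congr_app hℓ (op b)) _).trans
        (Subtype.ext (by exact NatTrans.naturality_apply g f.op l))
      map_sec b c f f' _ _ := (NatTrans.naturality_apply ℓ f'.op _).symm.trans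
        (congrArg (ℓ.app _) (Subtype.ext (by exact (L.map_comp_apply f.op f'.op l).symm))) }
  naturality a a' m := by
    refine ConcreteCategory.hom_ext _ _ fun l => ?_
    refine PushforwardSection.ext (by exact NatTrans.naturality_apply g m l) fun b f _ _ => ?_
    exact congrArg (ℓ.app _) (Subtype.ext (by exact (L.map_comp_apply m f.op l).symm))

def pushforwardTranspose (h : L ⟶ G.pushforward p) {g : L ⟶ Y'}
    (hg : h ≫ G.pushforwardπ p = g) : (G.preimage g).toFunctor ⟶ X where
  app a := TypeCat.ofHom fun l => (h.app a l.1).val (by subst hg; exact l.2)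
  naturality a a' m := by
    subst hg
    refine ConcreteCategory.hom_ext _ _ fun l => ?_
    exact (PushforwardSection.val_congr (NatTrans.naturality_apply h m l.1)
      (by exact (G.preimage _).map m l.2)).trans (PushforwardSection.val_restrict _ l.2 _ _)

lemma pushforwardTranspose_comp (h : L ⟶ G.pushforward p) {g : L ⟶ Y'}
    (hg : h ≫ G.pushforwardπ p = g) : G.pushforwardTranspose h hg ≫ p = G.fromPreimage g := by
  subst hg
  ext a : 2
  refine ConcreteCategory.hom_ext _ _ fun l => ?_
  exact PushforwardSection.p_val (h.app a l.1) l.2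

lemma comp_pushforwardLift {K : Psh A} (i : K ⟶ L) (g : L ⟶ Y') (h : K ⟶ G.pushforward p)
    (hg : h ≫ G.pushforwardπ p = i ≫ g) (ℓ : (G.preimage g).toFunctor ⟶ X)
    (hℓ : ℓ ≫ p = G.fromPreimage g)
    (hi : (G.preimage g).fromPreimage i ≫ ℓ = G.pushforwardTranspose h hg) :
    i ≫ G.pushforwardLift g ℓ hℓ = h := by
  ext a : 2
  refine ConcreteCategory.hom_ext _ _ fun k => ?_
  refine PushforwardSection.ext
    (by exact (ConcreteCategory.congr_hom (NatTrans.congr_app hg a) k).symm) fun b f _ hf => ?_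
  have hnat := NatTrans.naturality_apply h f.op k
  have hbase : (h.app (op b) (K.map f.op k)).base ∈ G.obj (op b) :=
    (congrArg PushforwardSection.base hnat).symm ▸ hf
  have hk : K.map f.op k ∈ (G.preimage (i ≫ g)).obj (op b) := by
    change (i ≫ g).app (op b) (K.map f.op k) ∈ G.obj (op b)
    rw [← hg]
    exact hbase
  symm
  calc (h.app a k).sec f hf
      = ((h.app a k).restrict f).val hf := (h.app a k).sec_eq_val_restrict f hf
    _ = (h.app (op b) (K.map f.op k)).val hbase := PushforwardSection.val_congr hnat.symm hf
    _ = ℓ.app (op b) (((G.preimage g).fromPreimage i).app (op b) ⟨K.map f.op k, hk⟩) :=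
        (ConcreteCategory.congr_hom (NatTrans.congr_app hi (op b)) ⟨K.map f.op k, hk⟩).symm
    _ = ℓ.app (op b) ⟨L.map f.op (i.app a k), _⟩ :=
        congrArg (ℓ.app _) (Subtype.ext (by exact NatTrans.naturality_apply i f.op k))

variable (G) in
lemma pushforwardπ_hasLiftingProperty
    (hp : ∀ {K L : Psh A} (i : K ⟶ L), Mono i → HasLiftingProperty i p)
    {K L : Psh A} (i : K ⟶ L) [Mono i] : HasLiftingProperty i (G.pushforwardπ p) where
  sq_hasLift {h g} sq := by
    have : Mono ((G.preimage g).fromPreimage i) :=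
      mono_of_mono_fac ((G.preimage g).fromPreimage_ι i)
    have sq' : CommSq (G.pushforwardTranspose h sq.w) ((G.preimage g).fromPreimage i) p
        (G.fromPreimage g) := ⟨G.pushforwardTranspose_comp h sq.w⟩
    obtain ⟨⟨⟨ℓ, hℓi, hℓp⟩⟩⟩ := (hp _ this).sq_hasLift sq'
    exact CommSq.HasLift.mk' { l := G.pushforwardLift g ℓ hℓp
                               fac_left := comp_pushforwardLift i g h sq.w ℓ hℓp hℓi
                               fac_right := rfl }

end CategoryTheory.Subfunctor

/-- Lemma: in a presheaf topos, any trivial fibration (map with the right lifting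
property with respect to all monomorphisms) extends along any monomorphism of its
codomain: it is the pullback of a trivial fibration over the bigger base. -/
theorem stmt10 {X Y Y' : Psh A} (v : Y ⟶ Y') (hv : Mono v) (p : X ⟶ Y)
    (hp : ∀ {K L : Psh A} (i : K ⟶ L), Mono i → HasLiftingProperty i p) :
    ∃ (X' : Psh A) (p' : X' ⟶ Y') (u : X ⟶ X'),
      (∀ {K L : Psh A} (i : K ⟶ L), Mono i → HasLiftingProperty i p') ∧
      IsPullback u p p' v := by
  let q := p ≫ Subfunctor.toRange v
  have hq {K L : Psh A} (i : K ⟶ L) (hi : Mono i) : HasLiftingProperty i q :=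
    have := hp i hi
    inferInstance
  have hsq : IsPullback (𝟙 X) p q (Subfunctor.toRange v) := IsPullback.of_horiz_isIso ⟨rfl⟩
  let G := Subfunctor.range v
  refine ⟨_, G.pushforwardπ q, G.toPushforward q,
    fun i _ => G.pushforwardπ_hasLiftingProperty hq i, ?_⟩
  simpa [G] using hsq.paste_horiz (G.isPullback_toPushforward q)
end

section
/- If A is an elegant Reedy category, any class C of presheaves on A that is saturated by monomorphisms and contains all representable presheaves contains all presheaves on A. -/
/-!
Order the nondegenerate sections ("cells") of a presheaf `X` by a well-order refining the
degree. Elegance says that every section is the restriction of a unique cell along a unique map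
of `A₋`, so the sections whose cell is `≤ i` form a subpresheaf `X_{≤ i}`, and `X_{≤ i}` arises
from `X_{< i} = ⋃_{j < i} X_{≤ j}` by a pushout of the boundary inclusion `∂a ⟶ a`, where `a` is
the object on which `i` lives. By transfinite induction `X` lies in `C` as soon as the boundaries of its
cells do. Since every cell of `∂a` has degree `< deg a`, induction on the degree puts all
boundaries, hence all presheaves, in `C`.
-/

open CategoryTheory CategoryTheory.Limits CategoryTheory.GrothendieckTopology Opposite

universe u

variable (A : Type u) [SmallCategory A]

variable {A}

/-- A class of presheaves saturated by monomorphisms. -/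
structure SaturatedByMono (C : Set (Psh A)) : Prop where
  empty : (⊥_ (Psh A)) ∈ C
  pushout : ∀ {X X' Y Y' : Psh A} (u : X ⟶ X') (i : X ⟶ Y) (i' : X' ⟶ Y') (v : Y ⟶ Y'),
    Mono i → IsPushout u i i' v → X ∈ C → X' ∈ C → Y ∈ C → Y' ∈ C
  chain : ∀ (α : Type u) [inst : LinearOrder α] [inst' : IsWellOrder α (· < ·)]
    (F : α ⥤ Psh A) (c : Cocone F), IsColimit c →
    (∀ (i j : α) (h : i ⟶ j), Mono (F.map h)) → (∀ i, F.obj i ∈ C) → c.pt ∈ C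
  retract : ∀ {X Y : Psh A} (s : X ⟶ Y) (r : Y ⟶ X), s ≫ r = 𝟙 X → Y ∈ C → X ∈ C

universe w

namespace CategoryTheory.Subfunctor

variable {C : Type*} [Category C] {F X : C ⥤ Type w}

lemma isPushout_fromPreimage (σ : F ⟶ X) (S : Subfunctor X)
    (hσ : ∀ U (f f' : F.obj U), f ∉ (S.preimage σ).obj U → f' ∉ (S.preimage σ).obj U →
      σ.app U f = σ.app U f' → f = f') :
    IsPushout (S.fromPreimage σ) (S.preimage σ).ι (homOfLe le_sup_left)
      (lift σ le_sup_right : F ⟶ (S ⊔ range σ).toFunctor) := by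
  refine IsPushout.of_forall_isPushout_app fun U => ?_
  have hpb : IsPullback ((S.fromPreimage σ).app U) ((S.preimage σ).ι.app U) (S.ι.app U)
      (σ.app U) := by
    rw [Types.isPullback_iff]
    refine ⟨rfl, fun x y h => Subtype.ext h.2, fun x f h => ⟨⟨f, ?_⟩, Subtype.ext h.symm, rfl⟩⟩
    simp only [preimage_obj, Set.mem_preimage]
    exact h ▸ x.2
  refine Types.isPushout_of_isPullback_of_mono (k := (S ⊔ range σ).ι.app U) hpb rfl rfl ?_
    fun f f' hf hf' => hσ U f f' (fun h => hf ⟨⟨f, h⟩, rfl⟩) (fun h => hf' ⟨⟨f', h⟩, rfl⟩)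
  ext ⟨x, hx | ⟨f, rfl⟩⟩
  · exact iff_of_true (Or.inl ⟨⟨x, hx⟩, rfl⟩) trivial
  · exact iff_of_true (Or.inr ⟨f, rfl⟩) trivial

section

variable {α : Type*} [Preorder α]

def diagram (G : α → Subfunctor X) (hG : Monotone G) : α ⥤ C ⥤ Type w where
  obj j := (G j).toFunctor
  map f := homOfLe (hG (leOfHom f))

def iSupCocone (G : α → Subfunctor X) (hG : Monotone G) : Cocone (diagram G hG) where
  pt := (⨆ j, G j).toFunctor
  ι := { app j := homOfLe (le_iSup G j) }

noncomputable def isColimitISupCocone [IsDirected α (· ≤ ·)] (G : α → Subfunctor X)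
    (hG : Monotone G) :
    IsColimit (iSupCocone G hG) :=
  evaluationJointlyReflectsColimits _ fun U => Types.FilteredColimit.isColimitOf _ _
    (fun ⟨x, hx⟩ => by
      obtain ⟨j, hj⟩ := Set.mem_iUnion.mp ((iSup_obj G U).le hx)
      exact ⟨j, ⟨x, hj⟩, rfl⟩)
    (fun i j xi xj h => by
      obtain ⟨k, hik, hjk⟩ := directed_of (· ≤ ·) i j
      exact ⟨k, homOfLE hik, homOfLE hjk, Subtype.ext (congrArg Subtype.val h :)⟩)

end

end CategoryTheory.Subfunctor

namespace ReedyStruct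

variable (R : ReedyStruct A)

lemma minus_or_exists_factorization_deg_lt {c b : A} (f : c ⟶ b) :
    R.minus f ∨ ∃ (e : A) (m : c ⟶ e) (p : e ⟶ b),
      R.minus m ∧ R.plus p ∧ R.deg e < R.deg b ∧ m ≫ p = f := by
  obtain ⟨e, m, p, hm, hp, rfl⟩ := R.fact f
  rcases (R.plus_deg p hp).lt_or_eq with hlt | heq
  · exact Or.inr ⟨e, m, p, hm, hp, hlt, rfl⟩
  · obtain ⟨rfl, rfl⟩ := R.plus_deg_eq p hp heq
    simpa using Or.inl hm

lemma not_minus_comp {c' c b : A} (g : c' ⟶ c) {f : c ⟶ b} (hf : ¬ R.minus f) :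
    ¬ R.minus (g ≫ f) := by
  -- Uniqueness of the factorization of `g ≫ f ∈ A₋` would make the degree-lowering `A₊`-part
  -- of `f` an identity.
  intro hgf
  obtain hf' | ⟨e, m, p, -, hp, hlt, rfl⟩ := R.minus_or_exists_factorization_deg_lt f
  · exact hf hf'
  obtain ⟨e', m', p', hm', hp', hgm⟩ := R.fact (g ≫ m)
  obtain ⟨rfl, -, -⟩ := R.fact_unique (g ≫ m ≫ p) (𝟙 b) m' (p' ≫ p) hgf (R.plus_id b) hm'
    (R.plus_comp _ _ hp' hp) (by rw [← Category.assoc, ← hgm]; simp)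
  exact (R.plus_deg p' hp').not_gt hlt

/-- The maps into `a` outside `A₋`, i.e. those factoring through a map of `A₊` that lowers
the degree: this is the usual boundary `∂a`. -/
def boundary (a : A) : Subfunctor (yoneda.obj a) where
  obj _ := {f | ¬ R.minus f}
  map g _ hf := R.not_minus_comp g.unop hf

lemma deg_lt_of_nondegenerate_boundary {a c : A} (f : (R.boundary a).toFunctor.obj (op c))
    (hf : R.Nondegenerate f) : R.deg c < R.deg a := by
  obtain hf' | ⟨e, m, p, hm, -, hlt, hmp⟩ := R.minus_or_exists_factorization_deg_lt f.1
  · exact absurd hf' f.2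
  have hp : ¬ R.minus p := fun hp => f.2 (hmp ▸ R.minus_comp m p hm hp)
  exact (le_of_not_gt fun hec => hf ⟨e, m, hm, hec, ⟨p, hp⟩, Subtype.ext hmp⟩).trans_lt hlt

end ReedyStruct

namespace SaturatedByMono

variable {C : Set (Psh A)}

lemma mem_of_iso (hC : SaturatedByMono C) {X Y : Psh A} (e : X ≅ Y) (hY : Y ∈ C) : X ∈ C :=
  hC.retract e.hom e.inv e.hom_inv_id hY

lemma iSup_mem (hC : SaturatedByMono C) {X : Psh A} {α : Type u} [LinearOrder α]
    [WellFoundedLT α] (G : α → Subfunctor X) (hG : Monotone G) (h : ∀ j, (G j).toFunctor ∈ C) :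
    (⨆ j, G j).toFunctor ∈ C :=
  hC.chain α _ _ (Subfunctor.isColimitISupCocone G hG)
    (fun _ _ f => inferInstanceAs (Mono (Subfunctor.homOfLe (hG (leOfHom f))))) h

end SaturatedByMono

namespace ElegantReedy

variable (E : ElegantReedy A) {X : Psh A}

variable (X) in
structure Cell where
  obj : A
  x : X.obj (op obj)
  nondeg : E.Nondegenerate x

lemma exists_cell {c : A} (z : X.obj (op c)) :
    ∃ (i : E.Cell X) (f : c ⟶ i.obj), E.minus f ∧ X.map f.op i.x = z := by
  obtain ⟨b, f, y, hf, hy, rfl⟩ := E.ez_exists X c z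
  exact ⟨⟨b, y, hy⟩, f, hf, rfl⟩

variable {E} in
lemma Cell.ext_of_eqToHom {i j : E.Cell X} (e : i.obj = j.obj)
    (h : i.x = X.map (eqToHom e).op j.x) : i = j := by
  obtain ⟨a, x, hx⟩ := i
  obtain ⟨b, y, hy⟩ := j
  cases e
  simp only [eqToHom_refl, op_id, Functor.map_id_apply] at h
  subst h
  rfl

noncomputable def cellOf {c : A} (z : X.obj (op c)) : E.Cell X :=
  (E.exists_cell z).choose

lemma exists_minus_map_cellOf {c : A} (z : X.obj (op c)) :
    ∃ f : c ⟶ (E.cellOf z).obj, E.minus f ∧ X.map f.op (E.cellOf z).x = z :=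
  (E.exists_cell z).choose_spec

lemma cellOf_eq {c : A} {z : X.obj (op c)} (i : E.Cell X) (f : c ⟶ i.obj) (hf : E.minus f)
    (hz : X.map f.op i.x = z) : E.cellOf z = i := by
  obtain ⟨f', hf', hz'⟩ := E.exists_minus_map_cellOf z
  obtain ⟨e, -, hx⟩ := E.ez_unique X c f' f _ i.x hf' hf (E.cellOf z).nondeg i.nondeg
    (hz'.trans hz.symm)
  exact Cell.ext_of_eqToHom e hx

lemma cellOf_x (i : E.Cell X) : E.cellOf i.x = i :=
  E.cellOf_eq i (𝟙 _) (E.minus_id _) (by simp)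

lemma cellOf_map_minus {c b : A} {m : c ⟶ b} (hm : E.minus m) (z : X.obj (op b)) :
    E.cellOf (X.map m.op z) = E.cellOf z := by
  obtain ⟨f, hf, hz⟩ := E.exists_minus_map_cellOf z
  exact E.cellOf_eq _ (m ≫ f) (E.minus_comp m f hm hf) (by simp [hz])

lemma deg_cellOf_le {c : A} (z : X.obj (op c)) : E.deg (E.cellOf z).obj ≤ E.deg c := by
  obtain ⟨f, hf, -⟩ := E.exists_minus_map_cellOf z
  exact E.minus_deg f hf

lemma minus_or_deg_cellOf_map_lt (i : E.Cell X) {c : A} (f : c ⟶ i.obj) :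
    E.minus f ∨ E.deg (E.cellOf (X.map f.op i.x)).obj < E.deg i.obj := by
  obtain hf | ⟨e, m, p, hm, -, hlt, rfl⟩ := E.minus_or_exists_factorization_deg_lt f
  · exact Or.inl hf
  · right
    rw [op_comp, Functor.map_comp_apply, E.cellOf_map_minus hm]
    exact (E.deg_cellOf_le _).trans_lt hlt

lemma map_injective_of_minus (i : E.Cell X) {c : A} {f f' : c ⟶ i.obj} (hf : E.minus f)
    (hf' : E.minus f') (h : X.map f.op i.x = X.map f'.op i.x) : f = f' := by
  obtain ⟨-, rfl, -⟩ := E.ez_unique X c f f' i.x i.x hf hf' i.nondeg i.nondeg h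
  simp

instance : IsWellFounded (E.Cell X) (InvImage (· < ·) fun i => E.deg i.obj) :=
  ⟨InvImage.wf _ wellFounded_lt⟩

noncomputable instance : LinearOrder (E.Cell X) :=
  IsWellFounded.wellOrderExtension (InvImage (· < ·) fun i : E.Cell X => E.deg i.obj)

instance : WellFoundedLT (E.Cell X) :=
  IsWellFounded.wellOrderExtension.isWellFounded_lt _

lemma Cell.lt_of_deg_lt {i j : E.Cell X} (h : E.deg i.obj < E.deg j.obj) : i < j :=
  Prod.Lex.left _ _ (IsWellFounded.rank_lt_of_rel h)

lemma cellOf_map_le {c c' : A} (g : c' ⟶ c) (z : X.obj (op c)) :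
    E.cellOf (X.map g.op z) ≤ E.cellOf z := by
  obtain ⟨f, -, hz⟩ := E.exists_minus_map_cellOf z
  conv_lhs => rw [← hz, ← Functor.map_comp_apply, ← op_comp]
  obtain hgf | hlt := E.minus_or_deg_cellOf_map_lt (E.cellOf z) (g ≫ f)
  · exact (E.cellOf_eq _ _ hgf rfl).le
  · exact (Cell.lt_of_deg_lt E hlt).le

def subfunctorOfCells (D : Set (E.Cell X)) (hD : IsLowerSet D) : Subfunctor X where
  obj U := {z | E.cellOf (c := U.unop) z ∈ D}
  map g _ hz := hD (E.cellOf_map_le g.unop _) hz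

@[simp]
lemma mem_subfunctorOfCells_obj {D : Set (E.Cell X)} (hD : IsLowerSet D) {c : A}
    (z : X.obj (op c)) : z ∈ (E.subfunctorOfCells D hD).obj (op c) ↔ E.cellOf z ∈ D :=
  Iff.rfl

lemma subfunctorOfCells_mono {D D' : Set (E.Cell X)} (hD : IsLowerSet D) (hD' : IsLowerSet D')
    (h : D ⊆ D') : E.subfunctorOfCells D hD ≤ E.subfunctorOfCells D' hD' :=
  fun _ _ hz => h hz

lemma monotone_subfunctorOfCells_Iic :
    Monotone fun i : E.Cell X => E.subfunctorOfCells (Set.Iic i) (isLowerSet_Iic _) :=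
  fun _ _ h => E.subfunctorOfCells_mono _ _ (Set.Iic_subset_Iic.mpr h)

lemma subfunctorOfCells_eq_iSup (D : Set (E.Cell X)) (hD : IsLowerSet D) :
    E.subfunctorOfCells D hD =
      ⨆ k : D, E.subfunctorOfCells (Set.Iic k.1) (isLowerSet_Iic _) := by
  refine le_antisymm (fun U z hz => ?_) (iSup_le fun k U z hz => hD hz k.2)
  rw [Subfunctor.iSup_obj]
  exact Set.mem_iUnion.mpr ⟨⟨_, hz⟩, (le_rfl : E.cellOf z ≤ _)⟩

lemma iSup_subfunctorOfCells_Iic :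
    ⨆ i : E.Cell X, E.subfunctorOfCells (Set.Iic i) (isLowerSet_Iic _) = ⊤ :=
  eq_top_iff.mpr fun U z _ => by
    rw [Subfunctor.iSup_obj]
    exact Set.mem_iUnion.mpr ⟨_, (le_rfl : E.cellOf (c := U.unop) z ≤ _)⟩

lemma subfunctorOfCells_Iic_eq_sup (i : E.Cell X) :
    E.subfunctorOfCells (Set.Iic i) (isLowerSet_Iic _) =
      E.subfunctorOfCells (Set.Iio i) (isLowerSet_Iio _) ⊔
        Subfunctor.range (yonedaEquiv.symm i.x) := by
  refine le_antisymm (fun U z hz => ?_)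
    (sup_le (E.subfunctorOfCells_mono _ _ Set.Iio_subset_Iic_self) ?_)
  · obtain hlt | rfl := (show E.cellOf z ≤ i from hz).lt_or_eq
    · exact Or.inl hlt
    · obtain ⟨f, -, hf⟩ := E.exists_minus_map_cellOf z
      exact Or.inr ⟨f, by simpa [CategoryTheory.yonedaEquiv_symm_app_apply] using hf⟩
  · rintro ⟨c⟩ _ ⟨f, rfl⟩
    simpa [cellOf_x] using E.cellOf_map_le f i.x

lemma preimage_subfunctorOfCells_Iio (i : E.Cell X) :
    (E.subfunctorOfCells (Set.Iio i) (isLowerSet_Iio _)).preimage (yonedaEquiv.symm i.x) =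
      E.boundary i.obj := by
  ext ⟨c⟩ f
  change E.cellOf (X.map f.op i.x) < i ↔ ¬ E.minus f
  refine ⟨fun hlt hf => (E.cellOf_eq i f hf rfl ▸ hlt).false, fun hf => ?_⟩
  exact Cell.lt_of_deg_lt E ((E.minus_or_deg_cellOf_map_lt i f).resolve_left hf)

variable {C : Set (Psh A)}

lemma mem_of_forall_boundary_mem (hC : SaturatedByMono C) (hrep : ∀ a : A, yoneda.obj a ∈ C)
    (X : Psh A) (hB : ∀ i : E.Cell X, (E.boundary i.obj).toFunctor ∈ C) : X ∈ C := by
  have hIic (i : E.Cell X) :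
      (E.subfunctorOfCells (Set.Iic i) (isLowerSet_Iic _)).toFunctor ∈ C := by
    induction i using WellFoundedLT.induction with
    | _ i ih =>
      have hIio : (E.subfunctorOfCells (Set.Iio i) (isLowerSet_Iio _)).toFunctor ∈ C := by
        rw [subfunctorOfCells_eq_iSup]
        exact hC.iSup_mem _ (E.monotone_subfunctorOfCells_Iic.comp (Subtype.mono_coe _))
          fun k => ih k.1 k.2
      have hpo := Subfunctor.isPushout_fromPreimage (yonedaEquiv.symm i.x)
        (E.subfunctorOfCells (Set.Iio i) (isLowerSet_Iio _)) fun U f f' hf hf' h => by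
        rw [preimage_subfunctorOfCells_Iio] at hf hf'
        exact E.map_injective_of_minus i (not_not.mp hf) (not_not.mp hf') h
      rw [subfunctorOfCells_Iic_eq_sup]
      refine hC.pushout _ _ _ _ inferInstance hpo ?_ hIio (hrep i.obj)
      rw [preimage_subfunctorOfCells_Iio]
      exact hB i
  have hX := hC.iSup_mem _ E.monotone_subfunctorOfCells_Iic hIic
  rw [iSup_subfunctorOfCells_Iic] at hX
  exact hC.mem_of_iso (asIso (⊤ : Subfunctor X).ι).symm hX

lemma boundary_mem (hC : SaturatedByMono C) (hrep : ∀ a : A, yoneda.obj a ∈ C) (a : A) :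
    (E.boundary a).toFunctor ∈ C := by
  induction h : E.deg a using Nat.strong_induction_on generalizing a with
  | _ n ih =>
    exact E.mem_of_forall_boundary_mem hC hrep _ fun i =>
      ih _ (h ▸ E.deg_lt_of_nondegenerate_boundary i.x i.nondeg) _ rfl

end ElegantReedy

/-- Proposition: over an elegant Reedy category, any class of presheaves saturated by
monomorphisms and containing the representables contains all presheaves. -/
theorem stmt13 (E : ElegantReedy A) (C : Set (Psh A)) (hC : SaturatedByMono C)
    (hrep : ∀ a : A, yoneda.obj a ∈ C) : ∀ X : Psh A, X ∈ C :=
  fun X => E.mem_of_forall_boundary_mem hC hrep X fun i => E.boundary_mem hC hrep i.obj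
end

section
/- Let A be an elegant Reedy category with a model structure on Â whose cofibrations are the monomorphisms (weak equivalences a localizer). Given fibrations p : X → S and q : Y → S and a map f : X → Y with q f = p, the map f is a weak equivalence if and only if for every representable a and every section s : a → S, the induced map a ×_S X → a ×_S Y is a weak equivalence. -/
open CategoryTheory CategoryTheory.Limits CategoryTheory.GrothendieckTopology Opposite

universe u

variable (A : Type u) [SmallCategory A]

variable {A}

/-!
Factor `f = j ≫ π` over `S` with `j` a trivial cofibration admitting a retraction `r` that is a
trivial fibration over `S`, and `π` a fibration. Pulling back along `s : a ⟶ S` keeps `r` a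
trivial fibration retracting `s^*j`, so `s^*j` is a weak equivalence and it suffices to treat
the fibration `π`. If `π` is a weak equivalence, it is a trivial fibration, and so are its
pullbacks. Conversely, if every `s^*π` is a weak equivalence, every pullback of `π` to a
representable is a trivial fibration, so `π` lifts against all subobjects of representables.
Over an elegant Reedy category, adjoining a missing section of minimal degree one at a time
(Zorn's lemma) extends this to lifting against all monomorphisms, so `π` is a trivial fibration.
-/

namespace PshModel

variable (M : PshModel A)

lemma weq_comp_iff_right {X Y Z : Psh A} {f : X ⟶ Y} (hf : M.W f) (g : Y ⟶ Z) :
    M.W (f ≫ g) ↔ M.W g :=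
  ⟨M.weq_cancel_left f g hf, M.weq_comp f g hf⟩

lemma weq_of_isIso {X Y : Psh A} (e : X ⟶ Y) [IsIso e] : M.W e :=
  M.weq_retract e (𝟙 X) (𝟙 X) (𝟙 X) (inv e) e (by simp) (by simp) (by simp) (by simp)
    (M.weq_id X)

lemma fib_of_isIso {X Y : Psh A} (e : X ⟶ Y) [IsIso e] : M.Fib e := by
  obtain ⟨Z, i, p, -, hi, hp, hip⟩ := M.fact_trivCof_fib e
  have hpW : M.W p := M.weq_cancel_left i p hi (hip ▸ M.weq_of_isIso e)
  exact M.fib_retract e p i (p ≫ inv e) (𝟙 Y) (𝟙 Y)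
    (by rw [← Category.assoc, hip]; simp) (by simp) (by simp [hip]) (by simp) hpW hp

variable {P X Y Z : Psh A} {fst : P ⟶ X} {snd : P ⟶ Y} {f : X ⟶ Z} {g : Y ⟶ Z}

lemma fib_of_isPullback (h : IsPullback fst snd f g) (hg : M.Fib g) : M.Fib fst := by
  rw [← h.isoPullback_hom_fst]
  exact M.fib_comp _ _ (M.fib_of_isIso _) (M.fib_pullback f g hg)

lemma weq_of_isPullback (h : IsPullback fst snd f g) (hg : M.Fib g) (hw : M.W g) : M.W fst := by
  rw [← h.isoPullback_hom_fst]
  exact M.weq_comp _ _ (M.weq_of_isIso _) (M.trivFib_pullback f g hg hw)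

lemma weq_of_rlp_monomorphisms {X Y : Psh A} (π : X ⟶ Y)
    (h : (MorphismProperty.monomorphisms (Psh A)).rlp π) : M.W π := by
  obtain ⟨Z, i, π', hi, -, hπ', rfl⟩ := M.fact_cof_trivFib π
  have := h i hi
  have sq : CommSq (𝟙 X) i (i ≫ π') π' := ⟨by simp⟩
  exact M.weq_retract _ π' i sq.lift (𝟙 _) (𝟙 _) sq.fac_left (by simp) (by simp)
    (by simp [sq.fac_right]) hπ'

end PshModel

lemma HasLiftingProperty.of_pullback_fst {C : Type*} [Category C] [HasPullbacks C]
    {K L E Y : C} (i : K ⟶ L) (π : E ⟶ Y)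
    (h : ∀ t : L ⟶ Y, HasLiftingProperty i (pullback.fst t π)) : HasLiftingProperty i π where
  sq_hasLift {u t} sq := by
    have sq' : CommSq (pullback.lift i u sq.w.symm) i (pullback.fst t π) (𝟙 L) :=
      ⟨by simp [pullback.lift_fst]⟩
    exact ⟨⟨{ l := sq'.lift ≫ pullback.snd t π
              fac_left := by rw [sq'.fac_left_assoc, pullback.lift_snd]
              fac_right := by
                rw [Category.assoc, ← pullback.condition, sq'.fac_right_assoc, Category.id_comp] }⟩⟩

section OverBase

variable {T E Y S : Psh A} (s : T ⟶ S) (q : Y ⟶ S) (g : E ⟶ Y) {mE : E ⟶ S}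

lemma isPullback_pullbackMap (hg : g ≫ q = mE) :
    IsPullback (pullback.map s mE s q (𝟙 T) g (𝟙 S) (by simp) (by simp [hg]))
      (pullback.snd s mE) (pullback.snd s q) g := by
  subst hg
  refine IsPullback.of_right ?_ (pullback.lift_snd _ _ _) (IsPullback.of_hasPullback s q)
  simpa [pullback.lift_fst] using IsPullback.of_hasPullback s (g ≫ q)

lemma isPullback_fst_pullbackMap (t : T ⟶ Y) :
    IsPullback (pullback.fst t g)
      (pullback.lift (pullback.fst t g) (pullback.snd t g) (by simp [pullback.condition_assoc]))
      (pullback.lift (𝟙 T) t (by simp))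
      (pullback.map (t ≫ q) (g ≫ q) (t ≫ q) q (𝟙 T) g (𝟙 S) (by simp) (by simp)) := by
  refine IsPullback.of_bot ?_ (by apply pullback.hom_ext <;> simp [pullback.lift_fst,
    pullback.lift_snd, pullback.lift_snd_assoc, pullback.condition])
    (isPullback_pullbackMap (t ≫ q) q g rfl)
  simpa [pullback.lift_snd] using IsPullback.of_hasPullback t g

lemma PshModel.weq_pullbackMap_of_retraction (M : PshModel A) {X Z : Psh A} {pX : X ⟶ S}
    (pZ : Z ⟶ S) {j : X ⟶ Z} {r : Z ⟶ X} (hjr : j ≫ r = 𝟙 X) (hr : r ≫ pX = pZ)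
    (hrF : M.Fib r) (hrW : M.W r) :
    M.W (pullback.map s pX s pZ (𝟙 T) j (𝟙 S) (by simp) (by simp [← hr, reassoc_of% hjr])) := by
  refine M.weq_cancel_right _ _ (M.weq_of_isPullback (isPullback_pullbackMap s pX r hr) hrF hrW) ?_
  rw [pullback.map_comp]
  simpa [hjr] using M.weq_id _

end OverBase

lemma PshModel.exists_brownFactorization (M : PshModel A) {X Y S : Psh A} (q : Y ⟶ S)
    (f : X ⟶ Y) (hq : M.Fib q) (hp : M.Fib (f ≫ q)) :
    ∃ (Z : Psh A) (j : X ⟶ Z) (π : Z ⟶ Y) (r : Z ⟶ X),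
      j ≫ π = f ∧ j ≫ r = 𝟙 X ∧ M.W j ∧ M.Fib π ∧ M.Fib r ∧ M.W r ∧ r ≫ f ≫ q = π ≫ q := by
  obtain ⟨Z, j, w, -, hj, hw, hjw⟩ :=
    M.fact_trivCof_fib (pullback.lift (𝟙 X) f (by simp) : X ⟶ pullback (f ≫ q) q)
  have hjr : j ≫ w ≫ pullback.fst (f ≫ q) q = 𝟙 X := by
    rw [reassoc_of% hjw, pullback.lift_fst]
  refine ⟨Z, j, w ≫ pullback.snd _ _, w ≫ pullback.fst _ _, ?_, hjr, hj, ?_, ?_, ?_, ?_⟩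
  · rw [reassoc_of% hjw, pullback.lift_snd]
  · exact M.fib_comp _ _ hw (M.fib_of_isPullback (IsPullback.of_hasPullback _ _).flip hp)
  · exact M.fib_comp _ _ hw (M.fib_pullback _ _ hq)
  · exact M.weq_cancel_left j _ hj (hjr ▸ M.weq_id X)
  · simp only [Category.assoc, pullback.condition]

namespace ReedyStruct

variable (R : ReedyStruct A) {V : Psh A} (D : Subfunctor V)

def IsMinimalOutside {a : A} (x : V.obj (op a)) : Prop :=
  x ∉ D.obj (op a) ∧ ∀ (c : A) (y : V.obj (op c)), y ∉ D.obj (op c) → R.deg a ≤ R.deg c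

lemma exists_isMinimalOutside (hD : D ≠ ⊤) :
    ∃ (a : A) (x : V.obj (op a)), R.IsMinimalOutside D x := by
  classical
  have hne : ∃ n, ∃ (a : A) (x : V.obj (op a)), x ∉ D.obj (op a) ∧ R.deg a = n := by
    by_contra! h
    exact hD (eq_top_iff.2 fun c x _ ↦ by_contra fun hx ↦ h _ c.unop x hx rfl)
  obtain ⟨a, x, hx, ha⟩ := Nat.find_spec hne
  exact ⟨a, x, hx, fun c y hy ↦ ha ▸ Nat.find_min' hne ⟨c, y, hy, rfl⟩⟩

variable {R D} {a : A} {x : V.obj (op a)}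

lemma IsMinimalOutside.nondegenerate (hx : R.IsMinimalOutside D x) : R.Nondegenerate x := by
  rintro ⟨c, σ, -, hlt, z, rfl⟩
  by_cases hz : z ∈ D.obj (op c)
  · exact hx.1 (D.map σ.op hz)
  · exact (hlt.trans_le (hx.2 c z hz)).false

lemma IsMinimalOutside.minus (hx : R.IsMinimalOutside D x) {c : A} {g : c ⟶ a}
    (hg : V.map g.op x ∉ D.obj (op c)) : R.minus g := by
  obtain ⟨b, σ, δ, hσ, hδ, rfl⟩ := R.fact g
  have hδx : V.map δ.op x ∉ D.obj (op b) := fun h ↦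
    hg (by rw [op_comp, Functor.map_comp_apply]; exact D.map σ.op h)
  obtain ⟨rfl, rfl⟩ := R.plus_deg_eq δ hδ (le_antisymm (R.plus_deg δ hδ) (hx.2 b _ hδx))
  simpa using hσ

end ReedyStruct

lemma ElegantReedy.map_injective_of_isMinimalOutside (EL : ElegantReedy A) {V : Psh A}
    {D : Subfunctor V} {a : A} {x : V.obj (op a)} (hx : EL.IsMinimalOutside D x) {c : A}
    {g g' : c ⟶ a} (h : V.map g.op x = V.map g'.op x) (hg : V.map g.op x ∉ D.obj (op c)) :
    g = g' := by
  obtain ⟨_, hgg', -⟩ := EL.ez_unique V c g g' x x (hx.minus hg) (hx.minus (h ▸ hg))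
    hx.nondegenerate hx.nondegenerate h
  simpa using hgg'.symm

section PartialLift

variable {V E Y : Psh A} (π : E ⟶ Y) (v : V ⟶ Y)

/-- `Γ ⊆ V × E` is the graph of a lift of `v` along `π` defined on part of `V`. -/
structure IsPartialLift (Γ : Subfunctor (FunctorToTypes.prod V E)) : Prop where
  functional {c : Aᵒᵖ} {x : V.obj c} {e e' : E.obj c} :
    (x, e) ∈ Γ.obj c → (x, e') ∈ Γ.obj c → e = e'
  comm {c : Aᵒᵖ} {x : V.obj c} {e : E.obj c} : (x, e) ∈ Γ.obj c → π.app c e = v.app c x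

def graphDomain (Γ : Subfunctor (FunctorToTypes.prod V E)) : Subfunctor V where
  obj c := {x | ∃ e, (x, e) ∈ Γ.obj c}
  map f := by
    rintro x ⟨e, he⟩
    exact ⟨E.map f e, Γ.map f he⟩

variable {π v}

lemma isPartialLift_bot : IsPartialLift π v ⊥ where
  functional h := h.elim
  comm h := h.elim

lemma isPartialLift_sSup {𝒞 : Set (Subfunctor (FunctorToTypes.prod V E))}
    (h𝒞 : IsChain (· ≤ ·) 𝒞) (h : ∀ Γ ∈ 𝒞, IsPartialLift π v Γ) :
    IsPartialLift π v (sSup 𝒞) where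
  functional := by
    rintro c x e e' ⟨_, ⟨Γ, hΓ, rfl⟩, he⟩ ⟨_, ⟨Γ', hΓ', rfl⟩, he'⟩
    rcases h𝒞.total hΓ hΓ' with hle | hle
    · exact (h Γ' hΓ').functional (hle c he) he'
    · exact (h Γ hΓ).functional he (hle c he')
  comm := by
    rintro c x e ⟨_, ⟨Γ, hΓ, rfl⟩, he⟩
    exact (h Γ hΓ).comm he

variable {Γ : Subfunctor (FunctorToTypes.prod V E)} (hΓ : IsPartialLift π v Γ)
include hΓ

noncomputable def IsPartialLift.toHom : (graphDomain Γ).toFunctor ⟶ E where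
  app c := TypeCat.ofHom fun x ↦ x.2.choose
  naturality c d f := by
    ext x
    exact hΓ.functional ((graphDomain Γ).toFunctor.map f x).2.choose_spec
      (Γ.map f x.2.choose_spec)

lemma IsPartialLift.toHom_mem {c : Aᵒᵖ} (x : (graphDomain Γ).toFunctor.obj c) :
    (x.1, hΓ.toHom.app c x) ∈ Γ.obj c :=
  x.2.choose_spec

lemma IsPartialLift.toHom_app_eq {c : Aᵒᵖ} {x : (graphDomain Γ).toFunctor.obj c} {e : E.obj c}
    (he : (x.1, e) ∈ Γ.obj c) : hΓ.toHom.app c x = e :=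
  hΓ.functional (hΓ.toHom_mem x) he

lemma IsPartialLift.toHom_comp : hΓ.toHom ≫ π = (graphDomain Γ).ι ≫ v := by
  ext c x
  exact hΓ.comm (hΓ.toHom_mem x)

end PartialLift

section PartialLiftExtension

variable {V E Y : Psh A} {π : E ⟶ Y} {v : V ⟶ Y} {Γ : Subfunctor (FunctorToTypes.prod V E)}

lemma IsPartialLift.sup_range (hΓ : IsPartialLift π v Γ) {K : Psh A} (t : K ⟶ V) (L : K ⟶ E)
    (hL : L ≫ π = t ≫ v)
    (hagree : ∀ c k, t.app c k ∈ (graphDomain Γ).obj c → (t.app c k, L.app c k) ∈ Γ.obj c)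
    (hinj : ∀ c k k', t.app c k = t.app c k' → t.app c k ∉ (graphDomain Γ).obj c → k = k') :
    IsPartialLift π v (Γ ⊔ Subfunctor.range (FunctorToTypes.prod.lift t L)) := by
  have hmem : ∀ {c x e}, (x, e) ∈ (Γ ⊔ Subfunctor.range (FunctorToTypes.prod.lift t L)).obj c →
      (x, e) ∈ Γ.obj c ∨ ∃ k, t.app c k = x ∧ L.app c k = e := by
    rintro c x e (he | ⟨k, hk⟩)
    · exact Or.inl he
    · exact Or.inr ⟨k, (Prod.ext_iff.1 hk).1, (Prod.ext_iff.1 hk).2⟩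
  refine ⟨fun {c x e e'} he he' ↦ ?_, fun {c x e} he ↦ ?_⟩
  · by_cases hx : x ∈ (graphDomain Γ).obj c
    · have hΓmem : ∀ {e}, (x, e) ∈ (Γ ⊔ Subfunctor.range (FunctorToTypes.prod.lift t L)).obj c →
          (x, e) ∈ Γ.obj c := by
        intro e he
        rcases hmem he with he | ⟨k, rfl, rfl⟩
        · exact he
        · exact hagree c k hx
      exact hΓ.functional (hΓmem he) (hΓmem he')
    · rcases hmem he with he | ⟨k, rfl, rfl⟩
      · exact absurd ⟨e, he⟩ hx
      rcases hmem he' with he' | ⟨k', hk', rfl⟩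
      · exact absurd ⟨e', he'⟩ hx
      rw [hinj c k k' hk'.symm hx]
  · rcases hmem he with he | ⟨k, rfl, rfl⟩
    · exact hΓ.comm he
    · exact ConcreteCategory.congr_hom (congr_app hL c) k

end PartialLiftExtension

namespace ElegantReedy

variable (EL : ElegantReedy A) {E Y : Psh A} {π : E ⟶ Y}
  (hπ : ∀ (a : A) (P : Subfunctor (yoneda.obj a)), HasLiftingProperty P.ι π)
include EL hπ

/-- A section `x` outside the domain of minimal degree is nondegenerate, so `g ↦ x ⋅ g` is
injective away from the domain; a lift over the representable therefore glues onto `Γ`. -/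
lemma graphDomain_eq_top_of_maximal {V : Psh A} {v : V ⟶ Y}
    {Γ : Subfunctor (FunctorToTypes.prod V E)} (hΓ : Maximal (IsPartialLift π v) Γ) :
    graphDomain Γ = ⊤ := by
  by_contra hD
  obtain ⟨a, x, hx⟩ := EL.toReedyStruct.exists_isMinimalOutside _ hD
  let t : yoneda.obj a ⟶ V := yonedaEquiv.symm x
  let P := (graphDomain Γ).preimage t
  let ι : P.toFunctor ⟶ (graphDomain Γ).toFunctor :=
    Subfunctor.lift (P.ι ≫ t) (by rintro c _ ⟨k, rfl⟩; exact k.2)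
  have sq : CommSq (ι ≫ hΓ.1.toHom) P.ι π (t ≫ v) :=
    ⟨by rw [Category.assoc, hΓ.1.toHom_comp]; rfl⟩
  have hagree : ∀ c k, t.app c k ∈ (graphDomain Γ).obj c →
      (t.app c k, sq.lift.app c k) ∈ Γ.obj c := fun c k hk ↦ by
    rw [show sq.lift.app c k = _ from
      ConcreteCategory.congr_hom (congr_app sq.fac_left c) ⟨k, hk⟩]
    exact hΓ.1.toHom_mem (ι.app c ⟨k, hk⟩)
  have hext := hΓ.1.sup_range t sq.lift (by rw [sq.fac_right]) hagree
    fun c k k' h hk ↦ EL.map_injective_of_isMinimalOutside hx (c := c.unop) h hk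
  have ht : t.app (op a) (𝟙 a) = x := by
    change V.map (𝟙 a).op x = x
    simp
  exact hx.1 ⟨_, hΓ.2 hext le_sup_left _ (Or.inr ⟨𝟙 a, Prod.ext ht rfl⟩)⟩

theorem hasLiftingProperty_subfunctor_ι {V : Psh A} (S₀ : Subfunctor V) :
    HasLiftingProperty S₀.ι π where
  sq_hasLift {u v} sq := by
    have h₀ : IsPartialLift π v (⊥ ⊔ Subfunctor.range (FunctorToTypes.prod.lift S₀.ι u)) :=
      isPartialLift_bot.sup_range _ _ sq.w (fun _ _ ⟨_, he⟩ ↦ he.elim)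
        (fun _ _ _ h _ ↦ Subtype.ext h)
    obtain ⟨Γ, hle, hΓ⟩ := zorn_le_nonempty₀ {Γ | IsPartialLift π v Γ}
      (fun 𝒞 h𝒞 hchain _ _ ↦ ⟨sSup 𝒞, isPartialLift_sSup hchain h𝒞, fun _ ↦ le_sSup⟩) _ h₀
    have hD := EL.graphDomain_eq_top_of_maximal hπ hΓ
    refine ⟨⟨{ l := Subfunctor.lift (𝟙 V) (by rw [hD]; exact le_top) ≫ hΓ.1.toHom
               fac_left := ?_
               fac_right := by rw [Category.assoc, hΓ.1.toHom_comp]; rfl }⟩⟩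
    ext c x
    exact hΓ.1.toHom_app_eq (hle c (Or.inr ⟨x, rfl⟩))

theorem rlp_monomorphisms : (MorphismProperty.monomorphisms (Psh A)).rlp π := by
  intro U V m hm
  have : Mono m := hm
  have := EL.hasLiftingProperty_subfunctor_ι hπ (Subfunctor.range m)
  let e : Arrow.mk m ≅ Arrow.mk (Subfunctor.range m).ι :=
    Arrow.isoMk (asIso (Subfunctor.toRange m)) (Iso.refl _) (by simp)
  exact HasLiftingProperty.of_arrow_iso_left e.symm π

end ElegantReedy

theorem ElegantReedy.weq_iff_forall_weq_pullbackMap (EL : ElegantReedy A) (M : PshModel A)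
    {E Y S : Psh A} (q : Y ⟶ S) (π : E ⟶ Y) (hπ : M.Fib π) :
    M.W π ↔ ∀ (a : A) (s : yoneda.obj a ⟶ S),
      M.W (pullback.map s (π ≫ q) s q (𝟙 _) π (𝟙 _) (by simp) (by simp)) := by
  refine ⟨fun hW a s ↦ M.weq_of_isPullback (isPullback_pullbackMap s q π rfl) hπ hW, fun h ↦ ?_⟩
  refine M.weq_of_rlp_monomorphisms π (EL.rlp_monomorphisms fun a P ↦ ?_)
  refine HasLiftingProperty.of_pullback_fst _ _ fun t ↦ ?_
  have hpb := isPullback_fst_pullbackMap q π t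
  have hfib := M.fib_of_isPullback (isPullback_pullbackMap (t ≫ q) q π rfl) hπ
  exact M.lift_cof_trivFib _ _ inferInstance (M.fib_of_isPullback hpb hfib)
    (M.weq_of_isPullback hpb hfib (h a (t ≫ q)))

/-- Corollary: over an elegant Reedy category, weak equivalences between fibrations
over a base `S` are local: `f` is a weak equivalence if and only if its pullback over
every section of `S` by a representable is a weak equivalence. -/
theorem stmt15 (E : ElegantReedy A) (M : PshModel A)
    {X Y S : Psh A} (p : X ⟶ S) (q : Y ⟶ S) (hp : M.Fib p) (hq : M.Fib q)
    (f : X ⟶ Y) (hf : f ≫ q = p) :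
    M.W f ↔ ∀ (a : A) (s : yoneda.obj a ⟶ S),
      M.W (pullback.map s p s q (𝟙 _) f (𝟙 _) (by simp) (by simp [hf])) := by
  subst hf
  obtain ⟨Z, j, π, r, rfl, hjr, hj, hπ, hr, hrW, hrq⟩ := M.exists_brownFactorization q f hq hp
  rw [M.weq_comp_iff_right hj, E.weq_iff_forall_weq_pullbackMap M q π hπ]
  refine forall₂_congr fun a s ↦ ?_
  rw [← M.weq_comp_iff_right (M.weq_pullbackMap_of_retraction s _ hjr hrq hr hrW),
    pullback.map_comp]
  simp
end

section
/- Let A be a small category with a strongly proper model structure on Â and κ an infinite regular cardinal larger than the set of arrows of A. In the Hofmann–Streicher universe ρ : W̄ → W of presheaves with κ-small fibers, a map p : X → Y with κ-small fibers, classified by a cartesian square over y : Y → W, is a fibration if and only if y factors through the subpresheaf U ⊆ W of pointwise fibrations. Consequently, if p is the pullback of a fibration p' : X' → Y' with κ-small fibers along a monomorphism v : Y → Y', and p is classified by y : Y → U, then there exists y' : Y' → U with y' v = y. -/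
/-!
The fibre of `p` over a section `s : a ⟶ Y` is the pullback of `ρ` along `s ≫ y`, and `y ∘ s`
lies in `U` exactly when that pullback (and its restrictions) is a fibration. Fibrations are
stable under base change and, by strong properness, local on the base, so `p` is a fibration
iff `y` lands in `U`. For the extension, the universe extends `y` along the monomorphism `v` to a
classifying map `y'` of `p'`; as `p'` is a fibration, `y'` lands in `U`, and it restricts to `yU`
because `U ⟶ W` is a monomorphism.
-/

open CategoryTheory CategoryTheory.Limits CategoryTheory.GrothendieckTopology Opposite

universe u

variable (A : Type u) [SmallCategory A]

variable {A}

/-- A morphism of presheaves has `κ`-small fibers if all its fibers over sections of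
representables are presheaves with values of cardinality `< κ`. -/
def KSmall (κ : Cardinal.{u}) {X Y : Psh A} (p : X ⟶ Y) : Prop :=
  ∀ (a : A) (s : yoneda.obj a ⟶ Y) (b : A),
    Cardinal.mk ((pullback s p).obj (op b)) < κ

/-- The Hofmann--Streicher universe `ρ : W̄ ⟶ W` for presheaves with `κ`-small fibers:
it strictly classifies all maps with `κ`-small fibers, and classifying maps can be
extended along monomorphisms of the base. -/
structure HSUniverse (A : Type u) [SmallCategory A] (κ : Cardinal.{u}) where
  W : Psh A
  Wbar : Psh A
  ρ : Wbar ⟶ W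
  classifies : ∀ {X Y : Psh A} (p : X ⟶ Y), KSmall κ p →
    ∃ (x : X ⟶ Wbar) (y : Y ⟶ W), IsPullback x p ρ y
  ksmall : ∀ {Y : Psh A} (y : Y ⟶ W), KSmall κ (pullback.fst y ρ)
  extend : ∀ {X X' Y Y' : Psh A} (p : X ⟶ Y) (p' : X' ⟶ Y') (u : X ⟶ X') (v : Y ⟶ Y'),
    Mono v → KSmall κ p' → IsPullback u p p' v →
    ∀ (x : X ⟶ Wbar) (y : Y ⟶ W), IsPullback x p ρ y →
      ∃ (x' : X' ⟶ Wbar) (y' : Y' ⟶ W), IsPullback x' p' ρ y' ∧ v ≫ y' = y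

/-- The subpresheaf `U ⊆ W` of pointwise fibrations: those sections of `W` whose
associated map to the representable is a fibration. -/
def HSUniverse.Usub {κ : Cardinal.{u}} (V : HSUniverse A κ) (M : PshModel A) :
    Subfunctor V.W where
  obj a := {w | ∀ (b : A) (f : b ⟶ a.unop),
    M.Fib (pullback.fst (yonedaEquiv.symm (V.W.map f.op w)) V.ρ)}
  map := by
    intro a c g w hw b f
    rw [← FunctorToTypes.map_comp_apply]
    simpa using hw b (f ≫ g.unop)


namespace PshModel

variable (M : PshModel A)

instance : M.Fib.IsStableUnderComposition where
  comp_mem f g := M.fib_comp f g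

instance : M.Fib.RespectsIso :=
  MorphismProperty.respectsIso_of_isStableUnderComposition fun _ _ e (_ : IsIso e) =>
    M.fib_of_isIso e

lemma StronglyProper.fib_iff {M : PshModel A} (hM : M.StronglyProper) {X Y : Psh A}
    (p : X ⟶ Y) : M.Fib p ↔ ∀ (a : A) (s : yoneda.obj a ⟶ Y), M.Fib (pullback.fst s p) :=
  ⟨fun hp _ s => M.fib_pullback s p hp, hM.2 p⟩

end PshModel

lemma MorphismProperty.pullback_fst_iff_of_isPullback {C : Type*} [Category C] [HasPullbacks C]
    (P : MorphismProperty C) [P.RespectsIso] {X Y Z E B : C} {x : X ⟶ E} {p : X ⟶ Y}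
    {ρ : E ⟶ B} {y : Y ⟶ B} (sq : IsPullback x p ρ y) (s : Z ⟶ Y) :
    P (pullback.fst s p) ↔ P (pullback.fst (s ≫ y) ρ) := by
  have pasted := ((IsPullback.of_hasPullback s p).flip.paste_horiz sq).flip
  exact P.arrow_mk_iso_iff (Arrow.isoMk pasted.isoPullback (Iso.refl _))

namespace HSUniverse

variable {κ : Cardinal.{u}} (V : HSUniverse A κ) {M : PshModel A}

lemma factors_through_Usub_iff {Y : Psh A} (y : Y ⟶ V.W) :
    (∃ yU : Y ⟶ (V.Usub M).toFunctor, yU ≫ (V.Usub M).ι = y) ↔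
      ∀ (a : A) (s : yoneda.obj a ⟶ Y), M.Fib (pullback.fst (s ≫ y) V.ρ) := by
  -- `rw` cannot rewrite the first leg of `pullback.fst` past its `HasPullback` instance
  have fib_congr {b : A} {s t : yoneda.obj b ⟶ V.W} (h : s = t) :
      M.Fib (pullback.fst s V.ρ) → M.Fib (pullback.fst t V.ρ) := by
    subst h; exact id
  have restrict_app {a b : A} (η : Y.obj (op a)) (f : b ⟶ a) :
      yonedaEquiv.symm (V.W.map f.op (y.app (op a) η)) =
        (yoneda.map f ≫ yonedaEquiv.symm η) ≫ y := by
    rw [CategoryTheory.yonedaEquiv_symm_map f.op, Category.assoc,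
      CategoryTheory.yonedaEquiv_symm_naturality_right]
    rfl
  constructor
  · rintro ⟨yU, rfl⟩ a s
    refine fib_congr ?_ ((yU.app (op a) (yonedaEquiv s)).2 a (𝟙 a))
    simpa using restrict_app (yonedaEquiv s) (𝟙 a)
  · intro h
    refine ⟨(V.Usub M).lift y ?_, (V.Usub M).lift_ι y _⟩
    rintro ⟨a⟩ _ ⟨η, rfl⟩ b f
    exact fib_congr (restrict_app η f).symm (h b _)

lemma fib_iff_factors_through_Usub (hM : M.StronglyProper) {X Y : Psh A} {p : X ⟶ Y}
    {x : X ⟶ V.Wbar} {y : Y ⟶ V.W} (sq : IsPullback x p V.ρ y) :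
    M.Fib p ↔ ∃ yU : Y ⟶ (V.Usub M).toFunctor, yU ≫ (V.Usub M).ι = y := by
  rw [hM.fib_iff, V.factors_through_Usub_iff]
  exact forall₂_congr fun _ s => MorphismProperty.pullback_fst_iff_of_isPullback M.Fib sq s

end HSUniverse

theorem stmt17_general (M : PshModel A) (hM : M.StronglyProper) (κ : Cardinal.{u})
    (V : HSUniverse A κ) {X Y : Psh A} (p : X ⟶ Y)
    (x : X ⟶ V.Wbar) (y : Y ⟶ V.W) (sq : IsPullback x p V.ρ y) :
    (M.Fib p ↔ ∃ yU : Y ⟶ (V.Usub M).toFunctor, yU ≫ (V.Usub M).ι = y) ∧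
    (∀ {X' Y' : Psh A} (p' : X' ⟶ Y') (u : X ⟶ X') (v : Y ⟶ Y'),
      Mono v → M.Fib p' → KSmall κ p' → IsPullback u p p' v →
      ∀ yU : Y ⟶ (V.Usub M).toFunctor, yU ≫ (V.Usub M).ι = y →
      ∃ yU' : Y' ⟶ (V.Usub M).toFunctor, v ≫ yU' = yU) := by
  refine ⟨V.fib_iff_factors_through_Usub hM sq, ?_⟩
  intro X' Y' p' u v hv hp' hsmall' hpb yU hyU
  obtain ⟨x', y', sq', hvy⟩ := V.extend p p' u v hv hsmall' hpb x y sq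
  obtain ⟨yU', hyU'⟩ := (V.fib_iff_factors_through_Usub hM sq').1 hp'
  exact ⟨yU', by rw [← cancel_mono (V.Usub M).ι, Category.assoc, hyU', hvy, hyU]⟩

/-- Proposition: a map with `κ`-small fibers is a fibration if and only if its
classifying map factors through `U ⊆ W`; consequently, classifying maps into `U` of
restrictions of fibrations with `κ`-small fibers extend along monomorphisms. -/
theorem stmt17 (M : PshModel A) (hM : M.StronglyProper) (κ : Cardinal.{u})
    (hκ : Cardinal.aleph0 ≤ κ) (hreg : κ.IsRegular)
    (harr : Cardinal.mk (Σ a b : A, a ⟶ b) < κ)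
    (V : HSUniverse A κ) {X Y : Psh A} (p : X ⟶ Y) (hp : KSmall κ p)
    (x : X ⟶ V.Wbar) (y : Y ⟶ V.W) (sq : IsPullback x p V.ρ y) :
    (M.Fib p ↔ ∃ yU : Y ⟶ (V.Usub M).toFunctor, yU ≫ (V.Usub M).ι = y) ∧
    (∀ {X' Y' : Psh A} (p' : X' ⟶ Y') (u : X ⟶ X') (v : Y ⟶ Y'),
      Mono v → M.Fib p' → KSmall κ p' → IsPullback u p p' v →
      ∀ yU : Y ⟶ (V.Usub M).toFunctor, yU ≫ (V.Usub M).ι = y →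
      ∃ yU' : Y' ⟶ (V.Usub M).toFunctor, v ≫ yU' = yU) :=
  stmt17_general M hM κ V p x y sq
end
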